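/- arXiv:1511.06799 — 2 statements merged into one kernel-verified Lean document; each statement's English description precedes it below -/
import Mathlib

section
/- Let s ∈ (1/2,1), T₁ ∈ ℝ∪{−∞}, T₂ ∈ (T₁,+∞], x₀ ∈ (T₁,T₂), and β ∈ (0, min{T₂−x₀, x₀−T₁}]. Let L : (T₁,x₀] → ℝⁿ and R : [x₀,T₂) → ℝⁿ be bounded continuous functions with finite kernel energies on (T₁,x₀)² and (x₀,T₂)² respectively, with L(x₀) = R(x₀), and assume moreover that L is Lipschitz on [x₀−β,x₀] with constant at most η and R is Lipschitz on [x₀,x₀+β] with constant at most η, for some η > 0. Let V := L on (T₁,x₀] and V := R on (x₀,T₂). Then E_{(T₁,T₂)}(V) − E_{(T₁,x₀)}(L) − E_{(x₀,T₂)}(R) ≤ C̃_s·η²β^{3−2s}/(3−2s) + Ĉ_s(1−s)β^{1−2s}(‖L‖²_{L^∞((T₁,x₀),ℝⁿ)} + ‖R‖²_{L^∞((x₀,T₂),ℝⁿ)}), where C_s := 2(1 + 4/(2s−1)²), C̃_s := 2Θ₀C_s/s and Ĉ_s := 32Θ₀C_s/(s(2s−1)). -/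
open MeasureTheory Filter Set
open scoped ENNReal RealInnerProductSpace Topology

noncomputable section

/-- Euclidean space `ℝⁿ`. -/
abbrev Eucl (n : ℕ) := EuclideanSpace ℝ (Fin n)

/-- The integer point of `ℝⁿ` associated to `ζ ∈ ℤⁿ`. -/
def intPt {n : ℕ} (ζ : Fin n → ℤ) : Eucl n := WithLp.toLp 2 (fun i => (ζ i : ℝ))

/-- The nonlocal interaction energy `E(Q) = ∬ K(x-y)|Q(x)-Q(y)|² dx dy`. -/
def energyE {n : ℕ} (K : ℝ → ℝ) (Q : ℝ → Eucl n) : ℝ≥0∞ :=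
  ∫⁻ x : ℝ, ∫⁻ y : ℝ, ENNReal.ofReal (K (x - y) * ‖Q x - Q y‖ ^ 2)

/-- The localized interaction energy `E_J(Q) = ∬_{J×J} K(x-y)|Q(x)-Q(y)|² dx dy`. -/
def energyEOn {n : ℕ} (K : ℝ → ℝ) (Q : ℝ → Eucl n) (J : Set ℝ) : ℝ≥0∞ :=
  ∫⁻ x in J, ∫⁻ y in J, ENNReal.ofReal (K (x - y) * ‖Q x - Q y‖ ^ 2)

/-- The action functional `I(Q) = E(Q) + ∫ a(x) W(Q(x)) dx`. -/
def action {n : ℕ} (K : ℝ → ℝ) (a : ℝ → ℝ) (W : Eucl n → ℝ) (Q : ℝ → Eucl n) : ℝ≥0∞ :=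
  energyE K Q + ∫⁻ x : ℝ, ENNReal.ofReal (a x * W (Q x))

/-- The square of the Gagliardo seminorm `[Q]_{H^s(J)}²`. -/
def gagliardoSq {n : ℕ} (s : ℝ) (Q : ℝ → Eucl n) (J : Set ℝ) : ℝ≥0∞ :=
  ENNReal.ofReal (1 - s) *
    ∫⁻ x in J, ∫⁻ y in J, ENNReal.ofReal (‖Q x - Q y‖ ^ 2 / |x - y| ^ (1 + 2*s))

/-- The constant `S₀` of the fractional Sobolev–Hölder embedding. -/
def sobolevConst (s : ℝ) : ℝ := 8 * (2 / ((s - 1/2) * Real.log 2) + 4)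

/-- `inf { W(τ) : dist(τ, ℤⁿ) ≥ d }`. -/
def Winf {n : ℕ} (W : Eucl n → ℝ) (d : ℝ) : ℝ :=
  sInf (W '' {τ : Eucl n | ∀ ζ : Fin n → ℤ, d ≤ ‖τ - intPt ζ‖})

/-- Structural data for the interaction kernel. -/
structure KernelData (s : ℝ) where
  K : ℝ → ℝ
  ρ₀ : ℝ
  θ₀ : ℝ
  Θ₀ : ℝ
  ρ₀_mem : ρ₀ ∈ Set.Ioc (0:ℝ) 1
  θ₀_pos : 0 < θ₀
  θ₀_le_Θ₀ : θ₀ ≤ Θ₀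
  K_meas : Measurable K
  K_nonneg : ∀ x, 0 ≤ K x
  K_even : ∀ x, K (-x) = K x
  K_lower : ∀ x : ℝ, x ≠ 0 → |x| ≤ ρ₀ → θ₀ * (1 - s) / |x| ^ (1 + 2*s) ≤ K x
  K_upper : ∀ x : ℝ, x ≠ 0 → K x ≤ Θ₀ * (1 - s) / |x| ^ (1 + 2*s)

/-- Kernel data together with the gradient bound `|K'(x)| ≤ Θ₁/|x|^{2+2s}`. -/
structure KernelDataC1 (s : ℝ) extends KernelData s where
  Θ₁ : ℝ
  Θ₁_pos : 0 < Θ₁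
  K_diff : ∀ x : ℝ, x ≠ 0 → DifferentiableAt ℝ K x
  K_deriv_bound : ∀ x : ℝ, x ≠ 0 → |deriv K x| ≤ Θ₁ / |x| ^ (2 + 2*s)

/-- Structural data for the multiwell potential `W`. -/
structure PotentialData (n : ℕ) where
  W : Eucl n → ℝ
  r : ℝ
  c₀ : ℝ
  C₀ : ℝ
  r_mem : r ∈ Set.Ioc (0:ℝ) (1/4)
  c₀_mem : c₀ ∈ Set.Ioo (0:ℝ) 1
  C₀_gt : 1 < C₀
  W_smooth : ContDiff ℝ 1 W
  W_grad_lip : ∃ Λ : NNReal, LipschitzWith Λ (gradient W)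
  W_periodic : ∀ (τ : Eucl n) (ζ : Fin n → ℤ), W (τ + intPt ζ) = W τ
  W_zero : ∀ ζ : Fin n → ℤ, W (intPt ζ) = 0
  W_pos : ∀ τ : Eucl n, (∀ ζ : Fin n → ℤ, τ ≠ intPt ζ) → 0 < W τ
  W_lower : ∀ τ : Eucl n, ‖τ‖ ≤ r → c₀ * ‖τ‖ ^ 2 ≤ W τ
  W_upper : ∀ τ : Eucl n, ‖τ‖ ≤ r → W τ ≤ C₀ * ‖τ‖ ^ 2

/-- Structural data for the modulation function `a`. -/
structure ModulationData where
  a : ℝ → ℝ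
  aLow : ℝ
  aUp : ℝ
  aLow_mem : aLow ∈ Set.Ioo (0:ℝ) 1
  aUp_gt : 1 < aUp
  a_smooth : ContDiff ℝ 1 a
  a_deriv_bdd : ∃ A : ℝ, ∀ x, |deriv a x| ≤ A
  a_bounds : ∀ x, aLow ≤ a x ∧ a x ≤ aUp

/-- `Q` is a weak solution of `𝓛(Q) + a ∇W(Q) = 0` on `J`. -/
def WeakSolutionOn {n : ℕ} (K : ℝ → ℝ) (a : ℝ → ℝ) (W : Eucl n → ℝ)
    (Q : ℝ → Eucl n) (J : Set ℝ) : Prop :=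
  ∀ ψ : ℝ → Eucl n, ContDiff ℝ (⊤ : ℕ∞) ψ → HasCompactSupport ψ → tsupport ψ ⊆ J →
    2 * (∫ x : ℝ, ∫ y : ℝ, K (x - y) * ⟪Q x - Q y, ψ x - ψ y⟫) +
      (∫ x : ℝ, a x * ⟪gradient W (Q x), ψ x⟫) = 0

/-- The constraint class `Γ((ζ₁,ζ₂),(b₁,b₂))` for a single transition. -/
def inGamma2 {n : ℕ} (r b₁ b₂ : ℝ) (ζ₁ ζ₂ : Fin n → ℤ) (Q : ℝ → Eucl n) : Prop :=
  Measurable Q ∧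
  (∀ᵐ x : ℝ ∂volume, x ≤ b₁ → ‖Q x - intPt ζ₁‖ ≤ r) ∧
  (∀ᵐ x : ℝ ∂volume, b₂ ≤ x → ‖Q x - intPt ζ₂‖ ≤ r)

/-- The constraint class `Γ(ζ⃗, b⃗)`, with `ζ` indexed by `1,…,N` and `b` by `1,…,2N-2`. -/
def inGamma {n : ℕ} (N : ℕ) (r : ℝ) (ζ : ℕ → Fin n → ℤ) (b : ℕ → ℝ)
    (Q : ℝ → Eucl n) : Prop :=
  Measurable Q ∧
  (∀ᵐ x : ℝ ∂volume, x ≤ b 1 → ‖Q x - intPt (ζ 1)‖ ≤ r) ∧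
  (∀ i : ℕ, 2 ≤ i → i ≤ N - 1 →
    ∀ᵐ x : ℝ ∂volume, x ∈ Set.Icc (b (2*i-2)) (b (2*i-1)) → ‖Q x - intPt (ζ i)‖ ≤ r) ∧
  (∀ᵐ x : ℝ ∂volume, b (2*N-2) ≤ x → ‖Q x - intPt (ζ N)‖ ≤ r)

/-- `m(ζ₂) = inf { I(Q) : Q ∈ Γ((ζ₁,ζ₂),(b₁,b₂)) }`. -/
def mInf {n : ℕ} (K : ℝ → ℝ) (a : ℝ → ℝ) (W : Eucl n → ℝ)
    (r b₁ b₂ : ℝ) (ζ₁ ζ₂ : Fin n → ℤ) : ℝ≥0∞ :=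
  ⨅ (Q : ℝ → Eucl n) (_ : inGamma2 r b₁ b₂ ζ₁ ζ₂ Q), action K a W Q

/-- The admissible set `𝒜(ζ₁)` of integer points minimizing `m`. -/
def AdmissibleSet {n : ℕ} (K : ℝ → ℝ) (a : ℝ → ℝ) (W : Eucl n → ℝ)
    (r b₁ b₂ : ℝ) (ζ₁ : Fin n → ℤ) : Set (Fin n → ℤ) :=
  {ζ₂ | ζ₂ ≠ ζ₁ ∧ ∀ ζ' : Fin n → ℤ, ζ' ≠ ζ₁ →
    mInf K a W r b₁ b₂ ζ₁ ζ₂ ≤ mInf K a W r b₁ b₂ ζ₁ ζ'}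

/-- `x` is a clean point for `(ρ, Q)`: it is the center of a bounded interval of
length at least `|log ρ|` on which `Q` is `ρ`-close to an integer point. -/
def CleanPoint {n : ℕ} (ρ : ℝ) (Q : ℝ → Eucl n) (x : ℝ) : Prop :=
  ∃ (ℓ : ℝ) (ζ : Fin n → ℤ), |Real.log ρ| ≤ 2 * ℓ ∧
    ∀ y ∈ Set.Icc (x - ℓ) (x + ℓ), ‖Q y - intPt ζ‖ ≤ ρ

/-- The constant `C_s` of Lemma LAKK. -/
def Cs (s : ℝ) : ℝ := 2 * (1 + 4 / (2*s - 1) ^ 2)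

namespace NGL

lemma lint_shift (c : ℝ) (H : ℝ → ℝ≥0∞) :
    ∫⁻ y in Ioi c, H (y - c) = ∫⁻ v in Ioi (0:ℝ), H v := by
  have h := (measurePreserving_sub_right (volume : Measure ℝ) c).setLIntegral_comp_preimage_emb
      (MeasurableEquiv.subRight c).measurableEmbedding H (Ioi 0)
  have hpre : (fun x : ℝ => x - c) ⁻¹' Ioi 0 = Ioi c := by
    rw [preimage_sub_const_Ioi, zero_add]
  rw [← hpre]
  exact h

lemma lint_reflect (c : ℝ) (H : ℝ → ℝ≥0∞) :
    ∫⁻ x in Iio c, H (c - x) = ∫⁻ u in Ioi (0:ℝ), H u := by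
  have h := (Measure.measurePreserving_sub_left (volume : Measure ℝ) c).setLIntegral_comp_preimage_emb
      (MeasurableEquiv.subLeft c).measurableEmbedding H (Ioi 0)
  have hpre : (fun x : ℝ => c - x) ⁻¹' Ioi 0 = Iio c := by
    rw [preimage_const_sub_Ioi, sub_zero]
  rw [← hpre]
  exact h

lemma lint_Ioi_rpow {p : ℝ} (hp : p < -1) {c : ℝ} (hc : 0 < c) :
    ∫⁻ t in Ioi c, ENNReal.ofReal (t ^ p) = ENNReal.ofReal (c ^ (p+1) / (-(p+1))) := by
  rw [← ofReal_integral_eq_lintegral_ofReal (integrableOn_Ioi_rpow_of_lt hp hc)]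
  · rw [integral_Ioi_rpow_of_lt hp hc]
    rw [neg_div, ← div_neg]
  · filter_upwards [ae_restrict_mem measurableSet_Ioi] with t ht
    exact Real.rpow_nonneg (le_of_lt (hc.trans ht)) p

lemma lint_Ioc_rpow {p : ℝ} (hp : -1 < p) {c : ℝ} (hc : 0 < c) :
    ∫⁻ t in Ioc 0 c, ENNReal.ofReal (t ^ p) = ENNReal.ofReal (c ^ (p+1) / (p+1)) := by
  have hint : IntervalIntegrable (fun t : ℝ => t ^ p) volume 0 c :=
    intervalIntegral.intervalIntegrable_rpow' hp
  have hInt : IntegrableOn (fun t : ℝ => t ^ p) (Ioc 0 c) volume :=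
    (intervalIntegrable_iff_integrableOn_Ioc_of_le hc.le).mp hint
  rw [← ofReal_integral_eq_lintegral_ofReal hInt]
  · have := integral_rpow (a := (0:ℝ)) (b := c) (Or.inl hp)
    rw [intervalIntegral.integral_of_le hc.le] at this
    rw [this, Real.zero_rpow (by linarith), sub_zero]
  · filter_upwards [ae_restrict_mem measurableSet_Ioc] with t ht
    exact Real.rpow_nonneg (le_of_lt ht.1) p

lemma inner_int {s : ℝ} (hs : 1/2 < s) {u : ℝ} (hu : 0 < u) :
    ∫⁻ v in Ioi (0:ℝ), ENNReal.ofReal ((u + v) ^ (-(1+2*s))) =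
      ENNReal.ofReal (u ^ (-(2*s)) / (2*s)) := by
  have h1 : ∫⁻ v in Ioi (0:ℝ), ENNReal.ofReal ((u + v) ^ (-(1+2*s))) =
      ∫⁻ y in Ioi u, ENNReal.ofReal (y ^ (-(1+2*s))) := by
    rw [← lint_shift u (fun v => ENNReal.ofReal ((u + v) ^ (-(1+2*s))))]
    refine setLIntegral_congr_fun measurableSet_Ioi ?_
    intro y _
    beta_reduce
    rw [show u + (y - u) = y by ring]
  rw [h1, lint_Ioi_rpow (by linarith) hu]
  norm_num

/-- The 1D integral of the squared bound function against `u^{-2s}/(2s)`. -/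

lemma oneDim {s β η M : ℝ} (hs : s ∈ Set.Ioo (1/2 : ℝ) 1) (hβ : 0 < β) (hη : 0 < η)
    (hM : 0 ≤ M) :
    ∫⁻ u in Ioi (0:ℝ), ENNReal.ofReal
        (2 * (if u ≤ β then η*u else 2*M)^2 * (u ^ (-(2*s)) / (2*s))) =
      ENNReal.ofReal ((η^2/s) * (β^(3-2*s)/(3-2*s)) + (4*M^2/s) * (β^(1-2*s)/(2*s-1))) := by
  obtain ⟨hs1, hs2⟩ := hs
  have hs0 : 0 < s := by linarith
  have hsplit : (Ioi (0:ℝ)) = Ioc 0 β ∪ Ioi β := (Ioc_union_Ioi_eq_Ioi hβ.le).symm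
  rw [hsplit, lintegral_union measurableSet_Ioi (Ioc_disjoint_Ioi le_rfl)]
  have hA : ∫⁻ u in Ioc (0:ℝ) β, ENNReal.ofReal
        (2 * (if u ≤ β then η*u else 2*M)^2 * (u ^ (-(2*s)) / (2*s))) =
      ENNReal.ofReal ((η^2/s) * (β^(3-2*s)/(3-2*s))) := by
    have hcong : ∫⁻ u in Ioc (0:ℝ) β, ENNReal.ofReal
          (2 * (if u ≤ β then η*u else 2*M)^2 * (u ^ (-(2*s)) / (2*s))) =
        ∫⁻ u in Ioc (0:ℝ) β, ENNReal.ofReal (η^2/s) * ENNReal.ofReal (u ^ (2-2*s)) := by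
      refine setLIntegral_congr_fun measurableSet_Ioc ?_
      intro u
      intro hu
      beta_reduce
      rw [if_pos hu.2, ← ENNReal.ofReal_mul (by positivity)]
      congr 1
      have hr : u ^ (2-2*s) = u^(2:ℕ) * u ^ (-(2*s)) := by
        rw [← Real.rpow_natCast u 2, ← Real.rpow_add hu.1]
        congr 1
        try push_cast
        try ring
      rw [hr]
      field_simp
    rw [hcong, lintegral_const_mul' _ _ ENNReal.ofReal_ne_top,
      lint_Ioc_rpow (by linarith) hβ, show (2-2*s+1 : ℝ) = 3-2*s by ring,
      ← ENNReal.ofReal_mul (by positivity)]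
  have hB : ∫⁻ u in Ioi β, ENNReal.ofReal
        (2 * (if u ≤ β then η*u else 2*M)^2 * (u ^ (-(2*s)) / (2*s))) =
      ENNReal.ofReal ((4*M^2/s) * (β^(1-2*s)/(2*s-1))) := by
    have hcong : ∫⁻ u in Ioi β, ENNReal.ofReal
          (2 * (if u ≤ β then η*u else 2*M)^2 * (u ^ (-(2*s)) / (2*s))) =
        ∫⁻ u in Ioi β, ENNReal.ofReal (4*M^2/s) * ENNReal.ofReal (u ^ (-(2*s))) := by
      refine setLIntegral_congr_fun measurableSet_Ioi ?_
      intro u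
      intro hu
      beta_reduce
      rw [if_neg (not_le.mpr hu), ← ENNReal.ofReal_mul (by positivity)]
      congr 1
      field_simp
      ring
    rw [hcong, lintegral_const_mul' _ _ ENNReal.ofReal_ne_top,
      lint_Ioi_rpow (by linarith) hβ, show (-(2*s)+1 : ℝ) = 1-2*s by ring,
      show (-(1-2*s) : ℝ) = 2*s-1 by ring, ← ENNReal.ofReal_mul (by positivity)]
  have h3 : (0:ℝ) < 3-2*s := by linarith
  have h21 : (0:ℝ) < 2*s-1 := by linarith
  rw [hA, hB, ← ENNReal.ofReal_add
    (mul_nonneg (by positivity) (div_nonneg (Real.rpow_nonneg hβ.le _) h3.le))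
    (mul_nonneg (by positivity) (div_nonneg (Real.rpow_nonneg hβ.le _) h21.le))]

lemma meas_bnd {β η M : ℝ} : Measurable (fun u : ℝ => (if u ≤ β then η*u else 2*M)) :=
  Measurable.ite measurableSet_Iic (measurable_const.mul measurable_id) measurable_const

lemma bnd_nonneg {β η M u : ℝ} (hη : 0 ≤ η) (hu : 0 ≤ u) (hM : 0 ≤ M) :
    0 ≤ (if u ≤ β then η*u else 2*M) := by
  split <;> positivity

lemma model {s β η M₁ M₂ : ℝ} (hs : s ∈ Set.Ioo (1/2 : ℝ) 1) (hβ : 0 < β) (hη : 0 < η)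
    (hM₁ : 0 ≤ M₁) (hM₂ : 0 ≤ M₂) :
    ∫⁻ u in Ioi (0:ℝ), ∫⁻ v in Ioi (0:ℝ), ENNReal.ofReal
        ((2 * (if u ≤ β then η*u else 2*M₁)^2 + 2 * (if v ≤ β then η*v else 2*M₂)^2)
          * (u+v) ^ (-(1+2*s))) =
      ENNReal.ofReal ((2*η^2/s) * (β^(3-2*s)/(3-2*s))
        + ((4*M₁^2+4*M₂^2)/s) * (β^(1-2*s)/(2*s-1))) := by
  obtain ⟨hs1, hs2⟩ := hs
  have hs0 : 0 < s := by linarith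
  set a : ℝ → ℝ := fun u => (if u ≤ β then η*u else 2*M₁) with ha
  set b : ℝ → ℝ := fun v => (if v ≤ β then η*v else 2*M₂) with hb
  have hameas : Measurable a := meas_bnd
  have hbmeas : Measurable b := meas_bnd
  -- Step 1: rewrite outer integrand on Ioi 0
  have step1 : ∫⁻ u in Ioi (0:ℝ), ∫⁻ v in Ioi (0:ℝ), ENNReal.ofReal
        ((2 * a u ^ 2 + 2 * b v ^ 2) * (u+v) ^ (-(1+2*s))) =
      ∫⁻ u in Ioi (0:ℝ), (ENNReal.ofReal (2 * a u ^ 2 * (u ^ (-(2*s)) / (2*s)))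
        + ∫⁻ v in Ioi (0:ℝ), ENNReal.ofReal (2 * b v ^ 2 * (u+v) ^ (-(1+2*s)))) := by
    refine setLIntegral_congr_fun measurableSet_Ioi ?_
    intro u
    intro hu
    beta_reduce
    have hu0 : (0:ℝ) < u := hu
    have hsplit : ∫⁻ v in Ioi (0:ℝ), ENNReal.ofReal
          ((2 * a u ^ 2 + 2 * b v ^ 2) * (u+v) ^ (-(1+2*s))) =
        ∫⁻ v in Ioi (0:ℝ), (ENNReal.ofReal (2 * a u ^ 2 * (u+v) ^ (-(1+2*s)))
          + ENNReal.ofReal (2 * b v ^ 2 * (u+v) ^ (-(1+2*s)))) := by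
      refine setLIntegral_congr_fun measurableSet_Ioi ?_
      intro v
      intro hv
      beta_reduce
      have hv0 : (0:ℝ) < v := hv
      have hp : 0 ≤ (u+v) ^ (-(1+2*s)) := Real.rpow_nonneg (by linarith) _
      rw [add_mul, ENNReal.ofReal_add (by positivity) (by positivity)]
    rw [hsplit, lintegral_add_left (by fun_prop)]
    congr 1
    have hc : ∀ v : ℝ, ENNReal.ofReal (2 * a u ^ 2 * (u+v) ^ (-(1+2*s))) =
        ENNReal.ofReal (2 * a u ^ 2) * ENNReal.ofReal ((u+v) ^ (-(1+2*s))) := fun v =>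
      ENNReal.ofReal_mul (by positivity)
    simp_rw [hc]
    rw [lintegral_const_mul' _ _ ENNReal.ofReal_ne_top, inner_int hs1 hu0,
      ← ENNReal.ofReal_mul (by positivity)]
  rw [step1, lintegral_add_left (by fun_prop)]
  -- second summand: swap and compute
  have hswap : ∫⁻ u in Ioi (0:ℝ), ∫⁻ v in Ioi (0:ℝ),
        ENNReal.ofReal (2 * b v ^ 2 * (u+v) ^ (-(1+2*s))) =
      ∫⁻ v in Ioi (0:ℝ), ENNReal.ofReal (2 * b v ^ 2 * (v ^ (-(2*s)) / (2*s))) := by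
    rw [lintegral_lintegral_swap (by fun_prop)]
    refine setLIntegral_congr_fun measurableSet_Ioi ?_
    intro v
    intro hv
    beta_reduce
    have hv0 : (0:ℝ) < v := hv
    have hc : ∀ u : ℝ, ENNReal.ofReal (2 * b v ^ 2 * (u+v) ^ (-(1+2*s))) =
        ENNReal.ofReal (2 * b v ^ 2) * ENNReal.ofReal ((v+u) ^ (-(1+2*s))) := by
      intro u
      rw [add_comm u v, ENNReal.ofReal_mul (by positivity)]
    simp_rw [hc]
    rw [lintegral_const_mul' _ _ ENNReal.ofReal_ne_top, inner_int hs1 hv0,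
      ← ENNReal.ofReal_mul (by positivity)]
  rw [hswap, oneDim ⟨hs1, hs2⟩ hβ hη hM₁, oneDim ⟨hs1, hs2⟩ hβ hη hM₂]
  have h3 : (0:ℝ) < 3-2*s := by linarith
  have h21 : (0:ℝ) < 2*s-1 := by linarith
  have hP3 : (0:ℝ) ≤ β^(3-2*s)/(3-2*s) := div_nonneg (Real.rpow_nonneg hβ.le _) h3.le
  have hP1 : (0:ℝ) ≤ β^(1-2*s)/(2*s-1) := div_nonneg (Real.rpow_nonneg hβ.le _) h21.le
  rw [← ENNReal.ofReal_add (by positivity) (by positivity)]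
  congr 1
  ring

lemma cross_bound {n : ℕ} {s Θ₀ : ℝ} (hs : s ∈ Set.Ioo (1/2 : ℝ) 1) (hΘ : 0 < Θ₀)
    (K : ℝ → ℝ) (hK0 : ∀ x, 0 ≤ K x)
    (hK : ∀ x : ℝ, x ≠ 0 → K x ≤ Θ₀ * (1 - s) / |x| ^ (1 + 2*s))
    {β η M₁ M₂ : ℝ} (hβ : 0 < β) (hη : 0 < η) (hM₁ : 0 ≤ M₁) (hM₂ : 0 ≤ M₂)
    (P Q : ℝ → Eucl n) (z : Eucl n) (S₁ S₂ : Set ℝ) (d₁ d₂ : ℝ → ℝ)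
    (hS₁ : MeasurableSet S₁) (hS₂ : MeasurableSet S₂)
    (hd₁ : ∀ x ∈ S₁, 0 < d₁ x) (hd₂ : ∀ y ∈ S₂, 0 < d₂ y)
    (habs : ∀ x ∈ S₁, ∀ y ∈ S₂, |x - y| = d₁ x + d₂ y)
    (hP : ∀ x ∈ S₁, ‖P x - z‖ ≤ (if d₁ x ≤ β then η * d₁ x else 2*M₁))
    (hQ : ∀ y ∈ S₂, ‖Q y - z‖ ≤ (if d₂ y ≤ β then η * d₂ y else 2*M₂))
    (hred₁ : ∀ H : ℝ → ℝ≥0∞, ∫⁻ x in S₁, H (d₁ x) ≤ ∫⁻ u in Ioi (0:ℝ), H u)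
    (hred₂ : ∀ H : ℝ → ℝ≥0∞, ∫⁻ y in S₂, H (d₂ y) ≤ ∫⁻ v in Ioi (0:ℝ), H v) :
    ∫⁻ x in S₁, ∫⁻ y in S₂, ENNReal.ofReal (K (x - y) * ‖P x - Q y‖^2) ≤
      ENNReal.ofReal (Θ₀ * (1-s) * ((2*η^2/s) * (β^(3-2*s)/(3-2*s))
        + ((4*M₁^2+4*M₂^2)/s) * (β^(1-2*s)/(2*s-1)))) := by
  obtain ⟨hs1, hs2⟩ := hs
  -- the model majorant
  set G : ℝ → ℝ → ℝ≥0∞ := fun u v => ENNReal.ofReal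
      ((2 * (if u ≤ β then η*u else 2*M₁)^2 + 2 * (if v ≤ β then η*v else 2*M₂)^2)
        * (u+v) ^ (-(1+2*s))) with hG
  -- pointwise bound
  have hpt : ∀ x ∈ S₁, ∀ y ∈ S₂, ENNReal.ofReal (K (x - y) * ‖P x - Q y‖^2) ≤
      ENNReal.ofReal (Θ₀ * (1-s)) * G (d₁ x) (d₂ y) := by
    intro x hx y hy
    have hdx := hd₁ x hx
    have hdy := hd₂ y hy
    have hane : 0 ≤ (if d₁ x ≤ β then η * d₁ x else 2*M₁) := bnd_nonneg hη.le hdx.le hM₁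
    have hbne : 0 ≤ (if d₂ y ≤ β then η * d₂ y else 2*M₂) := bnd_nonneg hη.le hdy.le hM₂
    have hxy : x - y ≠ 0 := by
      intro h
      have := habs x hx y hy
      rw [h, abs_zero] at this
      linarith
    have hKle : K (x - y) ≤ Θ₀ * (1-s) * (d₁ x + d₂ y) ^ (-(1+2*s)) := by
      have h := hK (x - y) hxy
      rw [habs x hx y hy] at h
      have hD : (0:ℝ) ≤ d₁ x + d₂ y := by linarith
      rw [Real.rpow_neg hD, ← div_eq_mul_inv]
      exact h
    have hnorm : ‖P x - Q y‖^2 ≤ 2 * (if d₁ x ≤ β then η * d₁ x else 2*M₁)^2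
        + 2 * (if d₂ y ≤ β then η * d₂ y else 2*M₂)^2 := by
      have htri : ‖P x - Q y‖ ≤ (if d₁ x ≤ β then η * d₁ x else 2*M₁)
          + (if d₂ y ≤ β then η * d₂ y else 2*M₂) := by
        calc ‖P x - Q y‖ ≤ ‖P x - z‖ + ‖z - Q y‖ := norm_sub_le_norm_sub_add_norm_sub _ _ _
        _ ≤ _ := by
            rw [norm_sub_rev z]
            exact add_le_add (hP x hx) (hQ y hy)
      nlinarith [norm_nonneg (P x - Q y), sq_nonneg ((if d₁ x ≤ β then η * d₁ x else 2*M₁)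
        - (if d₂ y ≤ β then η * d₂ y else 2*M₂))]
    rw [hG, ← ENNReal.ofReal_mul (mul_nonneg hΘ.le (by linarith))]
    apply ENNReal.ofReal_le_ofReal
    calc K (x - y) * ‖P x - Q y‖^2
        ≤ (Θ₀ * (1-s) * (d₁ x + d₂ y) ^ (-(1+2*s))) * (2 * (if d₁ x ≤ β then η * d₁ x else 2*M₁)^2
          + 2 * (if d₂ y ≤ β then η * d₂ y else 2*M₂)^2) := by
          have hpnn : (0:ℝ) ≤ (d₁ x + d₂ y) ^ (-(1+2*s)) := Real.rpow_nonneg (by linarith) _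
          exact mul_le_mul hKle hnorm (sq_nonneg _)
            (mul_nonneg (mul_nonneg hΘ.le (by linarith)) hpnn)
      _ = _ := by ring
  -- reduce to the model integral
  have hmono : ∫⁻ x in S₁, ∫⁻ y in S₂, ENNReal.ofReal (K (x - y) * ‖P x - Q y‖^2) ≤
      ENNReal.ofReal (Θ₀ * (1-s)) * ∫⁻ u in Ioi (0:ℝ), ∫⁻ v in Ioi (0:ℝ), G u v := by
    have inner1 : ∀ x ∈ S₁, ∫⁻ y in S₂, ENNReal.ofReal (K (x - y) * ‖P x - Q y‖^2) ≤
        ENNReal.ofReal (Θ₀ * (1-s)) * ∫⁻ v in Ioi (0:ℝ), G (d₁ x) v := by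
      intro x hx
      have step : ∫⁻ y in S₂, ENNReal.ofReal (K (x - y) * ‖P x - Q y‖^2) ≤
          ∫⁻ y in S₂, ENNReal.ofReal (Θ₀ * (1-s)) * G (d₁ x) (d₂ y) := by
        rw [← lintegral_indicator hS₂, ← lintegral_indicator hS₂]
        apply lintegral_mono
        intro y
        by_cases hy : y ∈ S₂
        · simpa [hy, indicator_of_mem] using hpt x hx y hy
        · simp [hy]
      refine step.trans ?_
      rw [lintegral_const_mul' _ _ ENNReal.ofReal_ne_top]
      exact mul_le_mul_right (hred₂ (fun t => G (d₁ x) t)) _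
    have step2 : ∫⁻ x in S₁, ∫⁻ y in S₂, ENNReal.ofReal (K (x - y) * ‖P x - Q y‖^2) ≤
        ∫⁻ x in S₁, ENNReal.ofReal (Θ₀ * (1-s)) * ∫⁻ v in Ioi (0:ℝ), G (d₁ x) v := by
      rw [← lintegral_indicator hS₁, ← lintegral_indicator hS₁]
      apply lintegral_mono
      intro x
      by_cases hx : x ∈ S₁
      · simpa [hx, indicator_of_mem] using inner1 x hx
      · simp [hx]
    refine step2.trans ?_
    rw [lintegral_const_mul' _ _ ENNReal.ofReal_ne_top]
    exact mul_le_mul_right (hred₁ (fun u => ∫⁻ v in Ioi (0:ℝ), G u v)) _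
  refine hmono.trans ?_
  rw [model ⟨hs1, hs2⟩ hβ hη hM₁ hM₂, ← ENNReal.ofReal_mul (mul_nonneg hΘ.le (by linarith))]

end NGL

open NGL

set_option maxHeartbeats 2000000

/-- the nonlocal gluing estimate with Lipschitz control of the two pieces
near the gluing point. -/
theorem nonlocal_gluing_lipschitz {n : ℕ} (hn : 1 ≤ n) (s : ℝ)
    (hs : s ∈ Set.Ioo (1/2 : ℝ) 1)
    (kd : KernelData s) (T₁ T₂ : EReal) (x₀ β : ℝ)
    (hT₁ : T₁ < (x₀ : EReal)) (hT₂ : (x₀ : EReal) < T₂)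
    (hβpos : 0 < β)
    (hβright : ((x₀ + β : ℝ) : EReal) ≤ T₂)
    (hβleft : T₁ ≤ ((x₀ - β : ℝ) : EReal))
    (L R : ℝ → Eucl n)
    (hLc : ContinuousOn L {x : ℝ | T₁ < (x : EReal) ∧ x ≤ x₀})
    (hRc : ContinuousOn R {x : ℝ | x₀ ≤ x ∧ (x : EReal) < T₂})
    (ML MR : ℝ)
    (hML : ∀ x : ℝ, T₁ < (x : EReal) → x ≤ x₀ → ‖L x‖ ≤ ML)
    (hMR : ∀ x : ℝ, x₀ ≤ x → (x : EReal) < T₂ → ‖R x‖ ≤ MR)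
    (hLfin : energyEOn kd.K L {x : ℝ | T₁ < (x : EReal) ∧ x < x₀} < ⊤)
    (hRfin : energyEOn kd.K R {x : ℝ | x₀ < x ∧ (x : EReal) < T₂} < ⊤)
    (hmatch : L x₀ = R x₀)
    (η : ℝ) (hη : 0 < η)
    (hLlip : ∀ x ∈ Set.Icc (x₀ - β) x₀, ∀ y ∈ Set.Icc (x₀ - β) x₀,
      ‖L x - L y‖ ≤ η * |x - y|)
    (hRlip : ∀ x ∈ Set.Icc x₀ (x₀ + β), ∀ y ∈ Set.Icc x₀ (x₀ + β),
      ‖R x - R y‖ ≤ η * |x - y|) :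
    energyEOn kd.K (fun x => if x ≤ x₀ then L x else R x)
        {x : ℝ | T₁ < (x : EReal) ∧ (x : EReal) < T₂} ≤
      energyEOn kd.K L {x : ℝ | T₁ < (x : EReal) ∧ x < x₀} +
      energyEOn kd.K R {x : ℝ | x₀ < x ∧ (x : EReal) < T₂} +
      ENNReal.ofReal ((2 * kd.Θ₀ * Cs s / s) * η ^ 2 * β ^ (3 - 2*s) / (3 - 2*s)) +
      ENNReal.ofReal ((32 * kd.Θ₀ * Cs s / (s * (2*s - 1))) * (1 - s) *
        β ^ (1 - 2*s) * (ML ^ 2 + MR ^ 2)) := by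
  obtain ⟨hs1, hs2⟩ := hs
  have hs0 : 0 < s := by linarith
  have h21 : (0:ℝ) < 2*s - 1 := by linarith
  have h3 : (0:ℝ) < 3 - 2*s := by linarith
  have hΘ : 0 < kd.Θ₀ := kd.θ₀_pos.trans_le kd.θ₀_le_Θ₀
  set A : Set ℝ := {x : ℝ | T₁ < (x : EReal) ∧ x < x₀} with hAdef
  set B : Set ℝ := {x : ℝ | x₀ < x ∧ (x : EReal) < T₂} with hBdef
  set J : Set ℝ := {x : ℝ | T₁ < (x : EReal) ∧ (x : EReal) < T₂} with hJdef
  have hAopen : IsOpen A := by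
    have : A = ((↑) : ℝ → EReal) ⁻¹' (Ioi T₁) ∩ Iio x₀ := rfl
    rw [this]
    exact (isOpen_Ioi.preimage continuous_coe_real_ereal).inter isOpen_Iio
  have hBopen : IsOpen B := by
    have : B = Ioi x₀ ∩ ((↑) : ℝ → EReal) ⁻¹' (Iio T₂) := rfl
    rw [this]
    exact isOpen_Ioi.inter (isOpen_Iio.preimage continuous_coe_real_ereal)
  have hAm : MeasurableSet A := hAopen.measurableSet
  have hBm : MeasurableSet B := hBopen.measurableSet
  have hAB : Disjoint A B := by
    rw [Set.disjoint_left]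
    intro x hx hx'
    exact absurd (hx.2.trans hx'.1) (lt_irrefl x)
  have hsubJ : A ∪ B ⊆ J := by
    rintro x (hx | hx)
    · exact ⟨hx.1, (EReal.coe_lt_coe_iff.mpr hx.2).trans hT₂⟩
    · exact ⟨hT₁.trans (EReal.coe_lt_coe_iff.mpr hx.1), hx.2⟩
  have hJAB : J =ᵐ[volume] (A ∪ B : Set ℝ) := by
    rw [MeasureTheory.ae_eq_set]
    constructor
    · refine measure_mono_null (fun x hx => ?_) (measure_singleton x₀)
      obtain ⟨⟨h1, h2⟩, h3'⟩ := hx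
      simp only [Set.mem_union, not_or] at h3'
      rcases lt_trichotomy x x₀ with h | h | h
      · exact absurd ⟨h1, h⟩ h3'.1
      · exact h
      · exact absurd ⟨h, h2⟩ h3'.2
    · rw [Set.diff_eq_empty.mpr hsubJ]
      exact measure_empty
  -- measurable versions of L, R
  have hLae : AEMeasurable L (volume.restrict A) :=
    (hLc.mono (fun x hx => ⟨hx.1, hx.2.le⟩)).aemeasurable hAm
  have hRae : AEMeasurable R (volume.restrict B) :=
    (hRc.mono (fun x hx => ⟨hx.1.le, hx.2⟩)).aemeasurable hBm
  -- decomposition of the glued energy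
  set V : ℝ → Eucl n := fun x => if x ≤ x₀ then L x else R x with hVdef
  have hVA : ∀ x ∈ A, V x = L x := fun x hx => if_pos hx.2.le
  have hVB : ∀ x ∈ B, V x = R x := fun x hx => if_neg (not_le.mpr hx.1)
  have hdecomp : energyEOn kd.K V J ≤ energyEOn kd.K L A +
      (∫⁻ x in A, ∫⁻ y in B, ENNReal.ofReal (kd.K (x - y) * ‖L x - R y‖^2)) +
      ((∫⁻ x in B, ∫⁻ y in A, ENNReal.ofReal (kd.K (x - y) * ‖R x - L y‖^2)) +
        energyEOn kd.K R B) := by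
    have hinner : ∀ x : ℝ, (∫⁻ y in J, ENNReal.ofReal (kd.K (x - y) * ‖V x - V y‖^2)) =
        (∫⁻ y in A, ENNReal.ofReal (kd.K (x - y) * ‖V x - V y‖^2))
          + ∫⁻ y in B, ENNReal.ofReal (kd.K (x - y) * ‖V x - V y‖^2) := by
      intro x
      rw [setLIntegral_congr hJAB, lintegral_union hBm hAB]
    have e1 : energyEOn kd.K V J =
        (∫⁻ x in A, ((∫⁻ y in A, ENNReal.ofReal (kd.K (x - y) * ‖V x - V y‖^2))
          + ∫⁻ y in B, ENNReal.ofReal (kd.K (x - y) * ‖V x - V y‖^2)))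
        + ∫⁻ x in B, ((∫⁻ y in A, ENNReal.ofReal (kd.K (x - y) * ‖V x - V y‖^2))
          + ∫⁻ y in B, ENNReal.ofReal (kd.K (x - y) * ‖V x - V y‖^2)) := by
      rw [energyEOn, setLIntegral_congr hJAB, lintegral_union hBm hAB]
      congr 1 <;> exact lintegral_congr (fun x => hinner x)
    rw [e1]
    -- A part
    have eA : (∫⁻ x in A, ((∫⁻ y in A, ENNReal.ofReal (kd.K (x - y) * ‖V x - V y‖^2))
          + ∫⁻ y in B, ENNReal.ofReal (kd.K (x - y) * ‖V x - V y‖^2))) =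
        ∫⁻ x in A, ((∫⁻ y in A, ENNReal.ofReal (kd.K (x - y) * ‖L x - L y‖^2))
          + ∫⁻ y in B, ENNReal.ofReal (kd.K (x - y) * ‖L x - R y‖^2)) := by
      refine setLIntegral_congr_fun hAm ?_
      intro x
      intro hx
      beta_reduce
      rw [hVA x hx]
      congr 1
      · refine setLIntegral_congr_fun hAm ?_
        intro y hy
        beta_reduce
        rw [hVA y hy]
      · refine setLIntegral_congr_fun hBm ?_
        intro y hy
        beta_reduce
        rw [hVB y hy]
    have eB : (∫⁻ x in B, ((∫⁻ y in A, ENNReal.ofReal (kd.K (x - y) * ‖V x - V y‖^2))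
          + ∫⁻ y in B, ENNReal.ofReal (kd.K (x - y) * ‖V x - V y‖^2))) =
        ∫⁻ x in B, ((∫⁻ y in A, ENNReal.ofReal (kd.K (x - y) * ‖R x - L y‖^2))
          + ∫⁻ y in B, ENNReal.ofReal (kd.K (x - y) * ‖R x - R y‖^2)) := by
      refine setLIntegral_congr_fun hBm ?_
      intro x
      intro hx
      beta_reduce
      rw [hVB x hx]
      congr 1
      · refine setLIntegral_congr_fun hAm ?_
        intro y hy
        beta_reduce
        rw [hVA y hy]
      · refine setLIntegral_congr_fun hBm ?_
        intro y hy
        beta_reduce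
        rw [hVB y hy]
    rw [eA, eB]
    -- additivity via a.e. measurability
    have haemA : AEMeasurable (fun x => ∫⁻ y in A,
        ENNReal.ofReal (kd.K (x - y) * ‖L x - L y‖^2)) (volume.restrict A) := by
      set L₀ := hLae.mk L with hL₀
      have hg : Measurable (fun x => ∫⁻ y in A,
          ENNReal.ofReal (kd.K (x - y) * ‖L₀ x - L₀ y‖^2)) := by
        apply Measurable.lintegral_prod_right'
          (f := fun p : ℝ × ℝ => ENNReal.ofReal (kd.K (p.1 - p.2) * ‖L₀ p.1 - L₀ p.2‖^2))
        exact Measurable.ennreal_ofReal ((kd.K_meas.comp (measurable_fst.sub measurable_snd)).mul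
          (((hLae.measurable_mk.comp measurable_fst).sub
            (hLae.measurable_mk.comp measurable_snd)).norm.pow_const 2))
      refine hg.aemeasurable.congr ?_
      filter_upwards [hLae.ae_eq_mk] with x hx
      refine lintegral_congr_ae ?_
      filter_upwards [hLae.ae_eq_mk] with y hy
      rw [hx, hy]
    have haemB : AEMeasurable (fun x => ∫⁻ y in B,
        ENNReal.ofReal (kd.K (x - y) * ‖R x - R y‖^2)) (volume.restrict B) := by
      set R₀ := hRae.mk R with hR₀
      have hg : Measurable (fun x => ∫⁻ y in B,
          ENNReal.ofReal (kd.K (x - y) * ‖R₀ x - R₀ y‖^2)) := by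
        apply Measurable.lintegral_prod_right'
          (f := fun p : ℝ × ℝ => ENNReal.ofReal (kd.K (p.1 - p.2) * ‖R₀ p.1 - R₀ p.2‖^2))
        exact Measurable.ennreal_ofReal ((kd.K_meas.comp (measurable_fst.sub measurable_snd)).mul
          (((hRae.measurable_mk.comp measurable_fst).sub
            (hRae.measurable_mk.comp measurable_snd)).norm.pow_const 2))
      refine hg.aemeasurable.congr ?_
      filter_upwards [hRae.ae_eq_mk] with x hx
      refine lintegral_congr_ae ?_
      filter_upwards [hRae.ae_eq_mk] with y hy
      rw [hx, hy]
    rw [lintegral_add_left' haemA, lintegral_add_right' _ haemB]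
    exact le_rfl
  refine hdecomp.trans ?_
  -- bounds on the two cross terms
  have hML0 : 0 ≤ ML := (norm_nonneg _).trans (hML x₀ hT₁ le_rfl)
  have hMR0 : 0 ≤ MR := (norm_nonneg _).trans (hMR x₀ le_rfl hT₂)
  have hredA : ∀ H : ℝ → ℝ≥0∞, ∫⁻ x in A, H (x₀ - x) ≤ ∫⁻ u in Ioi (0:ℝ), H u := by
    intro H
    exact (lintegral_mono_set (fun x hx => hx.2)).trans_eq (lint_reflect x₀ H)
  have hredB : ∀ H : ℝ → ℝ≥0∞, ∫⁻ x in B, H (x - x₀) ≤ ∫⁻ u in Ioi (0:ℝ), H u := by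
    intro H
    exact (lintegral_mono_set (fun x hx => hx.1)).trans_eq (lint_shift x₀ H)
  have hPbnd : ∀ x ∈ A, ‖L x - L x₀‖ ≤ (if x₀ - x ≤ β then η * (x₀ - x) else 2*ML) := by
    intro x hx
    by_cases hc : x₀ - x ≤ β
    · rw [if_pos hc]
      have h := hLlip x ⟨by linarith [hx.2], hx.2.le⟩ x₀ ⟨by linarith, le_rfl⟩
      rwa [abs_sub_comm, abs_of_pos (by linarith [hx.2])] at h
    · rw [if_neg hc]
      calc ‖L x - L x₀‖ ≤ ‖L x‖ + ‖L x₀‖ := norm_sub_le _ _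
        _ ≤ ML + ML := add_le_add (hML x hx.1 hx.2.le) (hML x₀ hT₁ le_rfl)
        _ = 2*ML := by ring
  have hQbnd : ∀ y ∈ B, ‖R y - L x₀‖ ≤ (if y - x₀ ≤ β then η * (y - x₀) else 2*MR) := by
    intro y hy
    rw [hmatch]
    by_cases hc : y - x₀ ≤ β
    · rw [if_pos hc]
      have h := hRlip y ⟨hy.1.le, by linarith⟩ x₀ ⟨le_rfl, by linarith⟩
      rwa [abs_of_pos (by linarith [hy.1])] at h
    · rw [if_neg hc]
      calc ‖R y - R x₀‖ ≤ ‖R y‖ + ‖R x₀‖ := norm_sub_le _ _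
        _ ≤ MR + MR := add_le_add (hMR y hy.1.le hy.2) (hMR x₀ le_rfl hT₂)
        _ = 2*MR := by ring
  have crossAB : (∫⁻ x in A, ∫⁻ y in B, ENNReal.ofReal (kd.K (x - y) * ‖L x - R y‖^2)) ≤
      ENNReal.ofReal (kd.Θ₀ * (1-s) * ((2*η^2/s) * (β^(3-2*s)/(3-2*s))
        + ((4*ML^2+4*MR^2)/s) * (β^(1-2*s)/(2*s-1)))) := by
    refine cross_bound ⟨hs1, hs2⟩ hΘ kd.K kd.K_nonneg kd.K_upper hβpos hη hML0 hMR0 L R (L x₀) A B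
      (fun x => x₀ - x) (fun y => y - x₀) hAm hBm
      (fun x hx => show (0:ℝ) < x₀ - x by linarith [hx.2])
      (fun y hy => show (0:ℝ) < y - x₀ by linarith [hy.1])
      (fun x hx y hy => ?_) hPbnd hQbnd hredA hredB
    show |x - y| = (x₀ - x) + (y - x₀)
    rw [abs_sub_comm, abs_of_pos (by linarith [hx.2, hy.1] : (0:ℝ) < y - x)]
    ring
  have crossBA : (∫⁻ x in B, ∫⁻ y in A, ENNReal.ofReal (kd.K (x - y) * ‖R x - L y‖^2)) ≤
      ENNReal.ofReal (kd.Θ₀ * (1-s) * ((2*η^2/s) * (β^(3-2*s)/(3-2*s))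
        + ((4*MR^2+4*ML^2)/s) * (β^(1-2*s)/(2*s-1)))) := by
    refine cross_bound ⟨hs1, hs2⟩ hΘ kd.K kd.K_nonneg kd.K_upper hβpos hη hMR0 hML0 R L (L x₀) B A
      (fun x => x - x₀) (fun y => x₀ - y) hBm hAm
      (fun x hx => show (0:ℝ) < x - x₀ by linarith [hx.1])
      (fun y hy => show (0:ℝ) < x₀ - y by linarith [hy.2])
      (fun x hx y hy => ?_) hQbnd hPbnd hredB hredA
    show |x - y| = (x - x₀) + (x₀ - y)
    rw [abs_of_pos (by linarith [hx.1, hy.2] : (0:ℝ) < x - y)]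
    ring
  -- final arithmetic
  have hp3 : (0:ℝ) ≤ β^(3-2*s) := Real.rpow_nonneg hβpos.le _
  have hp1 : (0:ℝ) ≤ β^(1-2*s) := Real.rpow_nonneg hβpos.le _
  have hCs : (2:ℝ) ≤ Cs s := by
    have h4 : (0:ℝ) ≤ 4 / (2*s-1)^2 := by positivity
    unfold Cs
    linarith
  have hs1' : (0:ℝ) ≤ 1 - s := by linarith
  set X₁ : ℝ := kd.Θ₀ * (1-s) * ((2*η^2/s) * (β^(3-2*s)/(3-2*s))
        + ((4*ML^2+4*MR^2)/s) * (β^(1-2*s)/(2*s-1))) with hX₁def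
  set X₂ : ℝ := kd.Θ₀ * (1-s) * ((2*η^2/s) * (β^(3-2*s)/(3-2*s))
        + ((4*MR^2+4*ML^2)/s) * (β^(1-2*s)/(2*s-1))) with hX₂def
  have hXnn : 0 ≤ X₁ ∧ 0 ≤ X₂ := by
    constructor <;>
    · refine mul_nonneg (mul_nonneg hΘ.le hs1') (add_nonneg ?_ ?_) <;>
      · apply mul_nonneg
        · positivity
        · exact div_nonneg (by assumption) (by linarith)
  have hb1nn : 0 ≤ (2 * kd.Θ₀ * Cs s / s) * η ^ 2 * β ^ (3 - 2*s) / (3 - 2*s) := by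
    apply div_nonneg _ h3.le
    apply mul_nonneg (mul_nonneg _ (sq_nonneg η)) hp3
    apply div_nonneg _ hs0.le
    apply mul_nonneg (by positivity) (by linarith)
  have hb2nn : 0 ≤ (32 * kd.Θ₀ * Cs s / (s * (2*s - 1))) * (1 - s) * β ^ (1 - 2*s)
      * (ML ^ 2 + MR ^ 2) := by
    apply mul_nonneg (mul_nonneg (mul_nonneg _ hs1') hp1) (by positivity)
    apply div_nonneg _ (by positivity)
    apply mul_nonneg (by positivity) (by linarith)
  have hkey : X₁ + X₂ ≤ (2 * kd.Θ₀ * Cs s / s) * η ^ 2 * β ^ (3 - 2*s) / (3 - 2*s)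
      + (32 * kd.Θ₀ * Cs s / (s * (2*s - 1))) * (1 - s) * β ^ (1 - 2*s) * (ML ^ 2 + MR ^ 2) := by
    have e1 : kd.Θ₀ * (1-s) * ((2*η^2/s) * (β^(3-2*s)/(3-2*s)))
        + kd.Θ₀ * (1-s) * ((2*η^2/s) * (β^(3-2*s)/(3-2*s)))
        ≤ (2 * kd.Θ₀ * Cs s / s) * η ^ 2 * β ^ (3 - 2*s) / (3 - 2*s) := by
      have hr : (0:ℝ) ≤ kd.Θ₀ * η^2 * (β^(3-2*s)/(3-2*s)) / s := by positivity
      calc kd.Θ₀ * (1-s) * ((2*η^2/s) * (β^(3-2*s)/(3-2*s)))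
            + kd.Θ₀ * (1-s) * ((2*η^2/s) * (β^(3-2*s)/(3-2*s)))
          = (4*(1-s)) * (kd.Θ₀ * η^2 * (β^(3-2*s)/(3-2*s)) / s) := by ring
        _ ≤ (2 * Cs s) * (kd.Θ₀ * η^2 * (β^(3-2*s)/(3-2*s)) / s) := by
            apply mul_le_mul_of_nonneg_right _ hr
            linarith
        _ = (2 * kd.Θ₀ * Cs s / s) * η ^ 2 * β ^ (3 - 2*s) / (3 - 2*s) := by ring
    have e2 : kd.Θ₀ * (1-s) * (((4*ML^2+4*MR^2)/s) * (β^(1-2*s)/(2*s-1)))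
        + kd.Θ₀ * (1-s) * (((4*MR^2+4*ML^2)/s) * (β^(1-2*s)/(2*s-1)))
        ≤ (32 * kd.Θ₀ * Cs s / (s * (2*s - 1))) * (1 - s) * β ^ (1 - 2*s)
          * (ML ^ 2 + MR ^ 2) := by
      have hr : (0:ℝ) ≤ kd.Θ₀ * (1-s) * (ML^2+MR^2) * (β^(1-2*s)/(2*s-1)) / s := by
        apply div_nonneg _ hs0.le
        exact mul_nonneg (mul_nonneg (mul_nonneg hΘ.le hs1') (by positivity))
          (div_nonneg hp1 h21.le)
      calc kd.Θ₀ * (1-s) * (((4*ML^2+4*MR^2)/s) * (β^(1-2*s)/(2*s-1)))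
            + kd.Θ₀ * (1-s) * (((4*MR^2+4*ML^2)/s) * (β^(1-2*s)/(2*s-1)))
          = 8 * (kd.Θ₀ * (1-s) * (ML^2+MR^2) * (β^(1-2*s)/(2*s-1)) / s) := by ring
        _ ≤ (32 * Cs s) * (kd.Θ₀ * (1-s) * (ML^2+MR^2) * (β^(1-2*s)/(2*s-1)) / s) := by
            apply mul_le_mul_of_nonneg_right _ hr
            linarith
        _ = (32 * kd.Θ₀ * Cs s / (s * (2*s - 1))) * (1 - s) * β ^ (1 - 2*s)
            * (ML ^ 2 + MR ^ 2) := by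
            field_simp
    calc X₁ + X₂ = (kd.Θ₀ * (1-s) * ((2*η^2/s) * (β^(3-2*s)/(3-2*s)))
            + kd.Θ₀ * (1-s) * ((2*η^2/s) * (β^(3-2*s)/(3-2*s))))
          + (kd.Θ₀ * (1-s) * (((4*ML^2+4*MR^2)/s) * (β^(1-2*s)/(2*s-1)))
            + kd.Θ₀ * (1-s) * (((4*MR^2+4*ML^2)/s) * (β^(1-2*s)/(2*s-1)))) := by
          rw [hX₁def, hX₂def]; ring
      _ ≤ _ := add_le_add e1 e2
  have hcross : (∫⁻ x in A, ∫⁻ y in B, ENNReal.ofReal (kd.K (x - y) * ‖L x - R y‖^2))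
      + (∫⁻ x in B, ∫⁻ y in A, ENNReal.ofReal (kd.K (x - y) * ‖R x - L y‖^2)) ≤
      ENNReal.ofReal ((2 * kd.Θ₀ * Cs s / s) * η ^ 2 * β ^ (3 - 2*s) / (3 - 2*s))
      + ENNReal.ofReal ((32 * kd.Θ₀ * Cs s / (s * (2*s - 1))) * (1 - s) *
        β ^ (1 - 2*s) * (ML ^ 2 + MR ^ 2)) := by
    calc (∫⁻ x in A, ∫⁻ y in B, ENNReal.ofReal (kd.K (x - y) * ‖L x - R y‖^2))
        + (∫⁻ x in B, ∫⁻ y in A, ENNReal.ofReal (kd.K (x - y) * ‖R x - L y‖^2))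
        ≤ ENNReal.ofReal X₁ + ENNReal.ofReal X₂ := add_le_add crossAB crossBA
      _ = ENNReal.ofReal (X₁ + X₂) := (ENNReal.ofReal_add hXnn.1 hXnn.2).symm
      _ ≤ ENNReal.ofReal ((2 * kd.Θ₀ * Cs s / s) * η ^ 2 * β ^ (3 - 2*s) / (3 - 2*s)
          + (32 * kd.Θ₀ * Cs s / (s * (2*s - 1))) * (1 - s) * β ^ (1 - 2*s)
            * (ML ^ 2 + MR ^ 2)) := ENNReal.ofReal_le_ofReal hkey
      _ = _ := ENNReal.ofReal_add hb1nn hb2nn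
  calc energyEOn kd.K L A +
      (∫⁻ x in A, ∫⁻ y in B, ENNReal.ofReal (kd.K (x - y) * ‖L x - R y‖^2)) +
      ((∫⁻ x in B, ∫⁻ y in A, ENNReal.ofReal (kd.K (x - y) * ‖R x - L y‖^2)) +
        energyEOn kd.K R B)
      = energyEOn kd.K L A + energyEOn kd.K R B +
        ((∫⁻ x in A, ∫⁻ y in B, ENNReal.ofReal (kd.K (x - y) * ‖L x - R y‖^2))
        + (∫⁻ x in B, ∫⁻ y in A, ENNReal.ofReal (kd.K (x - y) * ‖R x - L y‖^2))) := by
        abel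
    _ ≤ energyEOn kd.K L A + energyEOn kd.K R B +
        (ENNReal.ofReal ((2 * kd.Θ₀ * Cs s / s) * η ^ 2 * β ^ (3 - 2*s) / (3 - 2*s))
        + ENNReal.ofReal ((32 * kd.Θ₀ * Cs s / (s * (2*s - 1))) * (1 - s) *
          β ^ (1 - 2*s) * (ML ^ 2 + MR ^ 2))) := add_le_add_right hcross _
    _ = _ := by abel
end
end

section
/- Let s ∈ (1/2,1), β > 0, and let Q : [0,+∞) → ℝⁿ be measurable and bounded, continuous on [0,1) with Q(0) = 0, and with [Q]_{H^s([0,1))} < +∞. Then ∫₀^{+∞} x^{−2s}|Q(x)|² dx ≤ C_s·[ ∫₀^{β}(∫₀^{x} |Q(x)−Q(y)|²/|x−y|^{1+2s} dy) dx + 4‖Q‖²_{L^∞((0,+∞),ℝⁿ)}/((2s−1)β^{2s−1}) ], where C_s := 2(1 + 4/(2s−1)²). -/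
open MeasureTheory Filter Set
open scoped ENNReal RealInnerProductSpace Topology

noncomputable section

namespace LAKK

lemma conj22 : Real.HolderConjugate 2 2 := Real.HolderConjugate.two_two

lemma hhalfpow (a : ℝ≥0∞) : (a ^ (1/2 : ℝ)) ^ (2:ℕ) = a := by
  rw [← ENNReal.rpow_natCast (a ^ (1/2:ℝ)) 2, ← ENNReal.rpow_mul]
  norm_num

lemma r2nat (a : ℝ≥0∞) : a ^ (2:ℝ) = a ^ (2:ℕ) := by
  rw [← ENNReal.rpow_natCast a 2]; norm_num

lemma ofReal_rpow_sq {x e : ℝ} (hx : 0 < x) :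
    ENNReal.ofReal (x ^ e) ^ (2:ℕ) = ENNReal.ofReal (x ^ (2*e)) := by
  rw [← ENNReal.ofReal_pow (Real.rpow_nonneg hx.le _), ← Real.rpow_natCast (x ^ e) 2,
      ← Real.rpow_mul hx.le]
  norm_num [mul_comm]

lemma ofReal_sq_rpow_half {k : ℝ} (hk : 0 ≤ k) :
    (ENNReal.ofReal (k^2)) ^ (1/2:ℝ) = ENNReal.ofReal k := by
  rw [ENNReal.ofReal_pow hk, ← ENNReal.rpow_natCast (ENNReal.ofReal k) 2, ← ENNReal.rpow_mul]
  norm_num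

lemma lint_Ioo_rpow {a x : ℝ} (ha : -1 < a) (hx : 0 < x) :
    ∫⁻ y in Set.Ioo 0 x, ENNReal.ofReal (y ^ a) = ENNReal.ofReal (x ^ (a+1) / (a+1)) := by
  rw [setLIntegral_congr Ioo_ae_eq_Ioc]
  have hIoc : IntegrableOn (fun y : ℝ => y ^ a) (Set.Ioc 0 x) volume := by
    have hint : IntervalIntegrable (fun y : ℝ => y ^ a) volume 0 x := intervalIntegral.intervalIntegrable_rpow' ha
    rwa [intervalIntegrable_iff_integrableOn_Ioc_of_le hx.le] at hint
  rw [← ofReal_integral_eq_lintegral_ofReal hIoc ((ae_restrict_iff' measurableSet_Ioc).2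
      (Filter.Eventually.of_forall fun y hy => Real.rpow_nonneg hy.1.le a))]
  rw [← intervalIntegral.integral_of_le hx.le, integral_rpow (Or.inl ha),
      Real.zero_rpow (by intro h; linarith : a + 1 ≠ 0), sub_zero]

lemma lint_Ioi_rpow {b y : ℝ} (hb : b < -1) (hy : 0 < y) :
    ∫⁻ x in Set.Ioi y, ENNReal.ofReal (x ^ b) = ENNReal.ofReal (y ^ (b+1) / (-(b+1))) := by
  rw [← ofReal_integral_eq_lintegral_ofReal (integrableOn_Ioi_rpow_of_lt hb hy)
      ((ae_restrict_iff' measurableSet_Ioi).2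
        (Filter.Eventually.of_forall fun x hx => Real.rpow_nonneg (hy.trans hx).le b)),
      integral_Ioi_rpow_of_lt hb hy, div_neg, neg_div]

lemma swap_tri {β : ℝ} (T : ℝ → ℝ → ℝ≥0∞) (hT : Measurable (Function.uncurry T)) :
    ∫⁻ x in Set.Ioo 0 β, ∫⁻ y in Set.Ioo 0 x, T x y
      = ∫⁻ y in Set.Ioo 0 β, ∫⁻ x in Set.Ioi y ∩ Set.Ioo 0 β, T x y := by
  have hset : MeasurableSet {q : ℝ × ℝ | 0 < q.2 ∧ q.2 < q.1} := by
    have h : {q : ℝ × ℝ | 0 < q.2 ∧ q.2 < q.1} = {q : ℝ × ℝ | 0 < q.2} ∩ {q | q.2 < q.1} := rfl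
    rw [h]
    exact (measurableSet_lt measurable_const measurable_snd).inter
      (measurableSet_lt measurable_snd measurable_fst)
  have hmeas : Measurable (Function.uncurry fun x y => (Set.Ioo (0:ℝ) x).indicator (T x) y) := by
    have heq : (Function.uncurry fun x y => (Set.Ioo (0:ℝ) x).indicator (T x) y)
        = Set.indicator {q : ℝ × ℝ | 0 < q.2 ∧ q.2 < q.1} (Function.uncurry T) := by
      ext p
      simp [Function.uncurry, Set.indicator_apply, Set.mem_Ioo, Set.mem_setOf_eq]
    rw [heq]
    exact hT.indicator hset
  have h1 : ∀ x ∈ Set.Ioo (0:ℝ) β, ∫⁻ y in Set.Ioo 0 x, T x y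
      = ∫⁻ y in Set.Ioo 0 β, (Set.Ioo (0:ℝ) x).indicator (T x) y := by
    intro x hx
    rw [lintegral_indicator measurableSet_Ioo, Measure.restrict_restrict measurableSet_Ioo,
        Set.inter_eq_self_of_subset_left (Set.Ioo_subset_Ioo le_rfl hx.2.le)]
  have h2 : ∀ y ∈ Set.Ioo (0:ℝ) β, (∫⁻ x in Set.Ioo 0 β, (Set.Ioo (0:ℝ) x).indicator (T x) y)
      = ∫⁻ x in Set.Ioi y ∩ Set.Ioo 0 β, T x y := by
    intro y hy
    have heq : (fun x => (Set.Ioo (0:ℝ) x).indicator (T x) y)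
        = (Set.Ioi y).indicator (fun x => T x y) := by
      ext x
      by_cases h : y < x
      · simp [Set.indicator_apply, Set.mem_Ioo, Set.mem_Ioi, h, hy.1]
      · simp [Set.indicator_apply, Set.mem_Ioo, Set.mem_Ioi, h, hy.1]
    rw [heq, lintegral_indicator measurableSet_Ioi, Measure.restrict_restrict measurableSet_Ioi]
  rw [setLIntegral_congr_fun measurableSet_Ioo (h1),
      lintegral_lintegral_swap hmeas.aemeasurable,
      setLIntegral_congr_fun measurableSet_Ioo (h2)]

/-- The average `(1/x)∫₀ˣ f`. -/
def av (f : ℝ → ℝ) (x : ℝ) : ℝ≥0∞ :=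
  (ENNReal.ofReal x)⁻¹ * ∫⁻ y in Set.Ioo 0 x, ENNReal.ofReal (f y)

lemma measurable_av {f : ℝ → ℝ} : Measurable (av f) := by
  apply Measurable.mul measurable_id.ennreal_ofReal.inv
  have hmono : Monotone (fun x : ℝ => ∫⁻ y in Set.Ioo 0 x, ENNReal.ofReal (f y)) :=
    fun a b hab =>
      lintegral_mono' (Measure.restrict_mono (Set.Ioo_subset_Ioo le_rfl hab) le_rfl) le_rfl
  exact hmono.measurable

lemma ptY {s : ℝ} {f : ℝ → ℝ} (hf : Measurable f) (hf0 : ∀ x, 0 ≤ f x)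
    (hsp : 0 < 1 + 2*s) {x : ℝ} (hx0 : 0 < x) :
    (ENNReal.ofReal (x ^ (-s)) * (ENNReal.ofReal (f x) - av f x)) ^ (2:ℕ)
      ≤ ∫⁻ y in Set.Ioo 0 x, ENNReal.ofReal ((f x - f y)^2 / |x - y| ^ (1+2*s)) := by
  have hc0 : ENNReal.ofReal x ≠ 0 := by
    simp only [ne_eq, ENNReal.ofReal_eq_zero, not_le]; exact hx0
  have hctop : ENNReal.ofReal x ≠ ⊤ := ENNReal.ofReal_ne_top
  set A := ∫⁻ y in Set.Ioo 0 x, ENNReal.ofReal |f x - f y| with hA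
  set B := ∫⁻ y in Set.Ioo 0 x, ENNReal.ofReal ((f x - f y)^2) with hB
  have h1 : ENNReal.ofReal (f x) - av f x ≤ (ENNReal.ofReal x)⁻¹ * A := by
    rw [tsub_le_iff_right, av, ← mul_add]
    have hrw : ENNReal.ofReal (f x)
        = (ENNReal.ofReal x)⁻¹ * (ENNReal.ofReal (f x) * ENNReal.ofReal x) := by
      rw [mul_comm (ENNReal.ofReal (f x)), ← mul_assoc, ENNReal.inv_mul_cancel hc0 hctop, one_mul]
    rw [hrw]
    refine mul_le_mul_right ?_ _
    have hconst : ENNReal.ofReal (f x) * ENNReal.ofReal x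
        = ∫⁻ _ in Set.Ioo 0 x, ENNReal.ofReal (f x) := by
      rw [setLIntegral_const, Real.volume_Ioo, sub_zero]
    rw [hconst]
    calc ∫⁻ _ in Set.Ioo 0 x, ENNReal.ofReal (f x)
        ≤ ∫⁻ y in Set.Ioo 0 x, (ENNReal.ofReal |f x - f y| + ENNReal.ofReal (f y)) := by
          refine lintegral_mono fun y => ?_
          rw [← ENNReal.ofReal_add (abs_nonneg _) (hf0 y)]
          refine ENNReal.ofReal_le_ofReal ?_
          have := le_abs_self (f x - f y); linarith
      _ = A + ∫⁻ y in Set.Ioo 0 x, ENNReal.ofReal (f y) :=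
          lintegral_add_left ((measurable_const.sub hf).abs.ennreal_ofReal) _
  have h2 : A ≤ B ^ (1/2:ℝ) * (ENNReal.ofReal x) ^ (1/2:ℝ) := by
    have hφ : AEMeasurable (fun y => ENNReal.ofReal |f x - f y|)
        (volume.restrict (Set.Ioo 0 x)) :=
      ((measurable_const.sub hf).abs.ennreal_ofReal).aemeasurable
    have hH := ENNReal.lintegral_mul_le_Lp_mul_Lq (volume.restrict (Set.Ioo 0 x)) conj22 hφ
      (aemeasurable_const (b := (1:ℝ≥0∞)))
    simp only [Pi.mul_apply, mul_one, ENNReal.one_rpow] at hH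
    have hB2 : (∫⁻ y in Set.Ioo 0 x, (ENNReal.ofReal |f x - f y|) ^ (2:ℝ)) = B := by
      refine lintegral_congr fun y => ?_
      rw [r2nat, ← ENNReal.ofReal_pow (abs_nonneg _), sq_abs]
    have hone : (∫⁻ _ in Set.Ioo 0 x, (1:ℝ≥0∞)) = ENNReal.ofReal x := by
      rw [setLIntegral_const, one_mul, Real.volume_Ioo, sub_zero]
    rw [hB2, hone] at hH
    exact hH
  have h3 : (ENNReal.ofReal (f x) - av f x) ^ (2:ℕ)
      ≤ (ENNReal.ofReal x)⁻¹ ^ (2:ℕ) * (B * ENNReal.ofReal x) := by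
    calc (ENNReal.ofReal (f x) - av f x) ^ (2:ℕ)
        ≤ ((ENNReal.ofReal x)⁻¹ * A) ^ (2:ℕ) := pow_le_pow_left' h1 2
      _ = (ENNReal.ofReal x)⁻¹ ^ (2:ℕ) * A ^ (2:ℕ) := mul_pow _ _ _
      _ ≤ (ENNReal.ofReal x)⁻¹ ^ (2:ℕ) * (B * ENNReal.ofReal x) := by
          refine mul_le_mul_right ?_ _
          calc A ^ (2:ℕ)
              ≤ (B ^ (1/2:ℝ) * (ENNReal.ofReal x) ^ (1/2:ℝ)) ^ (2:ℕ) := pow_le_pow_left' h2 2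
            _ = B * ENNReal.ofReal x := by rw [mul_pow, hhalfpow, hhalfpow]
  have hid : (ENNReal.ofReal x)⁻¹ ^ (2:ℕ) * (B * ENNReal.ofReal x)
      = (ENNReal.ofReal x)⁻¹ * B := by
    rw [sq, mul_comm B (ENNReal.ofReal x), mul_assoc,
        ← mul_assoc (ENNReal.ofReal x)⁻¹ (ENNReal.ofReal x) B,
        ENNReal.inv_mul_cancel hc0 hctop, one_mul]
  have h4 : (ENNReal.ofReal (x ^ (-s)) * (ENNReal.ofReal (f x) - av f x)) ^ (2:ℕ)
      ≤ ENNReal.ofReal (x ^ (-(2*s))) * ((ENNReal.ofReal x)⁻¹ * B) := by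
    rw [mul_pow]
    calc ENNReal.ofReal (x ^ (-s)) ^ (2:ℕ) * (ENNReal.ofReal (f x) - av f x) ^ (2:ℕ)
        ≤ ENNReal.ofReal (x ^ (-s)) ^ (2:ℕ)
            * ((ENNReal.ofReal x)⁻¹ ^ (2:ℕ) * (B * ENNReal.ofReal x)) := mul_le_mul_right h3 _
      _ = ENNReal.ofReal (x ^ (-(2*s))) * ((ENNReal.ofReal x)⁻¹ * B) := by
          rw [hid, ofReal_rpow_sq hx0, show (2:ℝ) * -s = -(2*s) by ring]
  refine h4.trans ?_
  rw [← ENNReal.ofReal_inv_of_pos hx0, hB,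
      ← lintegral_const_mul' _ _ ENNReal.ofReal_ne_top,
      ← lintegral_const_mul' _ _ ENNReal.ofReal_ne_top]
  refine lintegral_mono_ae ((ae_restrict_iff' measurableSet_Ioo).2
    (Filter.Eventually.of_forall fun y hy => ?_))
  rw [← ENNReal.ofReal_mul (inv_nonneg.2 hx0.le), ← ENNReal.ofReal_mul (Real.rpow_nonneg hx0.le _)]
  refine ENNReal.ofReal_le_ofReal ?_
  have hyx : 0 < x - y := sub_pos.2 hy.2
  have hy0 : (0:ℝ) < y := hy.1
  have habs : |x - y| = x - y := abs_of_pos hyx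
  have hd0 : (0:ℝ) ≤ (f x - f y)^2 := sq_nonneg _
  have hpow : (x - y) ^ (1+2*s) ≤ x ^ (1+2*s) :=
    Real.rpow_le_rpow hyx.le (by linarith) hsp.le
  have hxid : x ^ (-(2*s)) * x⁻¹ = (x ^ (1+2*s))⁻¹ := by
    rw [← Real.rpow_neg_one x, ← Real.rpow_add hx0, ← Real.rpow_neg hx0.le]
    congr 1; ring
  calc x ^ (-(2*s)) * (x⁻¹ * (f x - f y)^2)
      = (f x - f y)^2 / x ^ (1+2*s) := by
        rw [← mul_assoc, hxid, div_eq_mul_inv, mul_comm]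
    _ ≤ (f x - f y)^2 / (x - y) ^ (1+2*s) := by
        rw [div_eq_mul_inv, div_eq_mul_inv]
        exact mul_le_mul_of_nonneg_left
          (inv_anti₀ (Real.rpow_pos_of_pos hyx _) hpow) hd0
    _ = (f x - f y)^2 / |x - y| ^ (1+2*s) := by rw [habs]

lemma ptX {s : ℝ} {f : ℝ → ℝ} (hs2 : 1/2 < s) (hs1 : s < 1)
    (hf : Measurable f) (hf0 : ∀ x, 0 ≤ f x) {x : ℝ} (hx0 : 0 < x) :
    (ENNReal.ofReal (x ^ (-s)) * av f x) ^ (2:ℕ)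
      ≤ ENNReal.ofReal (2/(2*s+1)) *
        ∫⁻ y in Set.Ioo 0 x, ENNReal.ofReal (x ^ ((-(2*s)-3)/2) * (y ^ ((1-2*s)/2) * f y ^ 2)) := by
  have h21' : (0:ℝ) < 2*s+1 := by linarith
  have hc0 : ENNReal.ofReal x ≠ 0 := by
    simp only [ne_eq, ENNReal.ofReal_eq_zero, not_le]; exact hx0
  have hctop : ENNReal.ofReal x ≠ ⊤ := ENNReal.ofReal_ne_top
  set g1 : ℝ := (2*s-1)/4 with hg1def
  set P := ∫⁻ y in Set.Ioo 0 x, ENNReal.ofReal (y ^ ((1-2*s)/2) * f y ^ 2) with hP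
  -- Hölder on the inner integral
  have hsplit : (∫⁻ y in Set.Ioo 0 x, ENNReal.ofReal (f y))
      = ∫⁻ y in Set.Ioo 0 x, (ENNReal.ofReal (y ^ (-g1) * f y) * ENNReal.ofReal (y ^ g1)) := by
    refine setLIntegral_congr_fun measurableSet_Ioo (fun y hy => ?_)
    rw [← ENNReal.ofReal_mul (mul_nonneg (Real.rpow_nonneg hy.1.le _) (hf0 y))]
    congr 1
    have hyy : y ^ (-g1) * y ^ g1 = 1 := by
      rw [← Real.rpow_add hy.1]; norm_num
    calc f y = (y ^ (-g1) * y ^ g1) * f y := by rw [hyy, one_mul]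
      _ = y ^ (-g1) * f y * y ^ g1 := by ring
  have hm1 : AEMeasurable (fun y => ENNReal.ofReal (y ^ (-g1) * f y))
      (volume.restrict (Set.Ioo 0 x)) :=
    (((measurable_id.pow measurable_const).mul hf).ennreal_ofReal).aemeasurable
  have hm2 : AEMeasurable (fun y : ℝ => ENNReal.ofReal (y ^ g1))
      (volume.restrict (Set.Ioo 0 x)) :=
    ((measurable_id.pow measurable_const).ennreal_ofReal).aemeasurable
  have hH := ENNReal.lintegral_mul_le_Lp_mul_Lq (volume.restrict (Set.Ioo 0 x)) conj22 hm1 hm2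
  simp only [Pi.mul_apply] at hH
  rw [← hsplit] at hH
  have hfact1 : (∫⁻ y in Set.Ioo 0 x, ENNReal.ofReal (y ^ (-g1) * f y) ^ (2:ℝ)) = P := by
    refine setLIntegral_congr_fun measurableSet_Ioo (fun y hy => ?_)
    rw [r2nat, ← ENNReal.ofReal_pow (mul_nonneg (Real.rpow_nonneg hy.1.le _) (hf0 y))]
    congr 1
    rw [mul_pow, ← Real.rpow_natCast (y ^ (-g1)) 2, ← Real.rpow_mul hy.1.le]
    congr 2
    rw [hg1def]; push_cast; ring
  have hfact2 : (∫⁻ y in Set.Ioo 0 x, ENNReal.ofReal (y ^ g1) ^ (2:ℝ))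
      = ENNReal.ofReal (x ^ ((2*s+1)/2) / ((2*s+1)/2)) := by
    have hptw : ∀ y ∈ Set.Ioo (0:ℝ) x,
        ENNReal.ofReal (y ^ g1) ^ (2:ℝ) = ENNReal.ofReal (y ^ ((2*s-1)/2)) := by
      intro y hy
      rw [r2nat, ofReal_rpow_sq hy.1]
      congr 2
      rw [hg1def]; ring
    rw [setLIntegral_congr_fun measurableSet_Ioo (hptw),
        lint_Ioo_rpow (by linarith) hx0]
    congr 2 <;> ring
  rw [hfact1, hfact2] at hH
  -- square the Hölder inequality
  have hFl2 : (∫⁻ y in Set.Ioo 0 x, ENNReal.ofReal (f y)) ^ (2:ℕ)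
      ≤ P * ENNReal.ofReal (x ^ ((2*s+1)/2) / ((2*s+1)/2)) := by
    calc (∫⁻ y in Set.Ioo 0 x, ENNReal.ofReal (f y)) ^ (2:ℕ)
        ≤ (P ^ (1/2:ℝ) * (ENNReal.ofReal (x ^ ((2*s+1)/2) / ((2*s+1)/2))) ^ (1/2:ℝ)) ^ (2:ℕ) :=
          pow_le_pow_left' hH 2
      _ = _ := by rw [mul_pow, hhalfpow, hhalfpow]
  -- assemble
  have hQ : ENNReal.ofReal (x ^ ((2*s+1)/2) / ((2*s+1)/2))
      = ENNReal.ofReal (x ^ ((2*s+1)/2)) * ENNReal.ofReal (2/(2*s+1)) := by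
    rw [← ENNReal.ofReal_mul (Real.rpow_nonneg hx0.le _)]
    congr 1
    rw [div_div_eq_mul_div, mul_div_assoc]
  have hKey : (ENNReal.ofReal (x ^ (-s)) * av f x) ^ (2:ℕ)
      ≤ ENNReal.ofReal (x ^ (-(2*s)-2)) * (P * ENNReal.ofReal (x ^ ((2*s+1)/2)))
          * ENNReal.ofReal (2/(2*s+1)) := by
    rw [av, mul_pow, mul_pow, ofReal_rpow_sq hx0]
    have hinv2 : ((ENNReal.ofReal x)⁻¹) ^ (2:ℕ) = ENNReal.ofReal (x ^ (-2:ℝ)) := by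
      rw [← ENNReal.ofReal_inv_of_pos hx0, ← Real.rpow_neg_one x, ofReal_rpow_sq hx0]
      norm_num
    rw [hinv2]
    calc ENNReal.ofReal (x ^ (2 * -s)) * (ENNReal.ofReal (x ^ (-2:ℝ))
            * (∫⁻ y in Set.Ioo 0 x, ENNReal.ofReal (f y)) ^ (2:ℕ))
        ≤ ENNReal.ofReal (x ^ (2 * -s)) * (ENNReal.ofReal (x ^ (-2:ℝ))
            * (P * (ENNReal.ofReal (x ^ ((2*s+1)/2)) * ENNReal.ofReal (2/(2*s+1))))) := by
          refine mul_le_mul_right (mul_le_mul_right ?_ _) _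
          rw [← hQ]; exact hFl2
      _ = (ENNReal.ofReal (x ^ (2 * -s)) * ENNReal.ofReal (x ^ (-2:ℝ))
            * ENNReal.ofReal (x ^ ((2*s+1)/2))) * P * ENNReal.ofReal (2/(2*s+1)) := by ring
      _ = ENNReal.ofReal (x ^ (-(2*s)-2)) * (P * ENNReal.ofReal (x ^ ((2*s+1)/2)))
          * ENNReal.ofReal (2/(2*s+1)) := by
          rw [← ENNReal.ofReal_mul (Real.rpow_nonneg hx0.le _), ← Real.rpow_add hx0]
          rw [show (2 * -s + -2 : ℝ) = -(2*s)-2 by ring]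
          ring
  refine hKey.trans ?_
  rw [mul_comm (ENNReal.ofReal (2/(2*s+1))) _]
  refine mul_le_mul_left ?_ _
  -- ofReal(x^{-(2s)-2}) * (P * ofReal(x^{(2s+1)/2})) = ∫⁻ T x y  (up to merging)
  rw [hP, ← lintegral_mul_const' _ _ ENNReal.ofReal_ne_top,
      ← lintegral_const_mul' _ _ ENNReal.ofReal_ne_top]
  refine le_of_eq (setLIntegral_congr_fun measurableSet_Ioo
    (fun y hy => ?_))
  rw [← ENNReal.ofReal_mul (mul_nonneg (Real.rpow_nonneg hy.1.le _) (pow_nonneg (hf0 y) 2)),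
      ← ENNReal.ofReal_mul (Real.rpow_nonneg hx0.le _)]
  congr 1
  have hxx : x ^ (-(2*s)-2) * x ^ ((2*s+1)/2) = x ^ ((-(2*s)-3)/2) := by
    rw [← Real.rpow_add hx0]; congr 1; ring
  calc x ^ (-(2*s)-2) * (y ^ ((1-2*s)/2) * f y ^ 2 * x ^ ((2*s+1)/2))
      = (x ^ (-(2*s)-2) * x ^ ((2*s+1)/2)) * (y ^ ((1-2*s)/2) * f y ^ 2) := by ring
    _ = x ^ ((-(2*s)-3)/2) * (y ^ ((1-2*s)/2) * f y ^ 2) := by rw [hxx]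

lemma Xbound {s β : ℝ} {f : ℝ → ℝ} (hs2 : 1/2 < s) (hs1 : s < 1)
    (hf : Measurable f) (hf0 : ∀ x, 0 ≤ f x) :
    (∫⁻ x in Set.Ioo 0 β, (ENNReal.ofReal (x ^ (-s)) * av f x) ^ (2:ℕ))
      ≤ ENNReal.ofReal ((2/(2*s+1))^2)
          * ∫⁻ x in Set.Ioo 0 β, ENNReal.ofReal (x ^ (-(2*s)) * f x ^ 2) := by
  have h21' : (0:ℝ) < 2*s+1 := by linarith
  set T : ℝ → ℝ → ℝ≥0∞ :=
    fun x y => ENNReal.ofReal (x ^ ((-(2*s)-3)/2) * (y ^ ((1-2*s)/2) * f y ^ 2)) with hT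
  have hTm : Measurable (Function.uncurry T) := by
    apply Measurable.ennreal_ofReal
    exact (measurable_fst.pow measurable_const).mul
      ((measurable_snd.pow measurable_const).mul ((hf.comp measurable_snd).pow_const 2))
  have h1 : (∫⁻ x in Set.Ioo 0 β, (ENNReal.ofReal (x ^ (-s)) * av f x) ^ (2:ℕ))
      ≤ ENNReal.ofReal (2/(2*s+1)) * ∫⁻ x in Set.Ioo 0 β, ∫⁻ y in Set.Ioo 0 x, T x y := by
    rw [← lintegral_const_mul' _ _ ENNReal.ofReal_ne_top]
    exact lintegral_mono_ae ((ae_restrict_iff' measurableSet_Ioo).2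
      (Filter.Eventually.of_forall fun x hx => ptX hs2 hs1 hf hf0 hx.1))
  rw [swap_tri T hTm] at h1
  have h2 : ∀ y ∈ Set.Ioo (0:ℝ) β, (∫⁻ x in Set.Ioi y ∩ Set.Ioo 0 β, T x y)
      ≤ ENNReal.ofReal (2/(2*s+1)) * ENNReal.ofReal (y ^ (-(2*s)) * f y ^ 2) := by
    intro y hy
    have hy0 : (0:ℝ) < y := hy.1
    have hstep : (∫⁻ x in Set.Ioi y ∩ Set.Ioo 0 β, T x y) ≤ ∫⁻ x in Set.Ioi y, T x y :=
      lintegral_mono' (Measure.restrict_mono Set.inter_subset_left le_rfl) le_rfl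
    have hptw : ∀ x ∈ Set.Ioi y, T x y
        = ENNReal.ofReal (x ^ ((-(2*s)-3)/2)) * ENNReal.ofReal (y ^ ((1-2*s)/2) * f y ^ 2) := by
      intro x hx
      exact ENNReal.ofReal_mul (Real.rpow_nonneg (hy0.trans hx).le _)
    have heval : (∫⁻ x in Set.Ioi y, T x y)
        = ENNReal.ofReal (y ^ ((-(2*s)-3)/2 + 1) / (-((-(2*s)-3)/2 + 1)))
            * ENNReal.ofReal (y ^ ((1-2*s)/2) * f y ^ 2) := by
      rw [setLIntegral_congr_fun measurableSet_Ioi (hptw),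
          lintegral_mul_const' _ _ ENNReal.ofReal_ne_top,
          lint_Ioi_rpow (by linarith) hy0]
    refine hstep.trans (le_of_eq ?_)
    rw [heval]
    have hco : y ^ ((-(2*s)-3)/2 + 1) / (-((-(2*s)-3)/2 + 1))
        = 2/(2*s+1) * y ^ ((-(2*s)-1)/2) := by
      rw [show ((-(2*s)-3)/2 + 1 : ℝ) = (-(2*s)-1)/2 by ring,
          show (-((-(2*s)-1)/2) : ℝ) = (2*s+1)/2 by ring,
          div_div_eq_mul_div, mul_div_assoc, mul_comm]
    rw [hco, ENNReal.ofReal_mul (by positivity), mul_assoc,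
        ← ENNReal.ofReal_mul (Real.rpow_nonneg hy0.le _)]
    congr 2
    rw [← mul_assoc, ← Real.rpow_add hy0]
    congr 2
    ring
  have h3 : (∫⁻ y in Set.Ioo 0 β, ∫⁻ x in Set.Ioi y ∩ Set.Ioo 0 β, T x y)
      ≤ ENNReal.ofReal (2/(2*s+1))
          * ∫⁻ y in Set.Ioo 0 β, ENNReal.ofReal (y ^ (-(2*s)) * f y ^ 2) := by
    rw [← lintegral_const_mul' _ _ ENNReal.ofReal_ne_top]
    exact lintegral_mono_ae ((ae_restrict_iff' measurableSet_Ioo).2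
      (Filter.Eventually.of_forall h2))
  refine (h1.trans (mul_le_mul_right h3 _)).trans (le_of_eq ?_)
  rw [← mul_assoc, ← ENNReal.ofReal_mul (by positivity), ← sq]

lemma core {s β : ℝ} {f : ℝ → ℝ} (hs2 : 1/2 < s) (hs1 : s < 1)
    (hf : Measurable f) (hf0 : ∀ x, 0 ≤ f x)
    (hfin : (∫⁻ x in Set.Ioo 0 β, ENNReal.ofReal (x ^ (-(2*s)) * f x ^ 2)) < ⊤) :
    (∫⁻ x in Set.Ioo 0 β, ENNReal.ofReal (x ^ (-(2*s)) * f x ^ 2))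
      ≤ ENNReal.ofReal (((2*s+1)/(2*s-1))^2) *
        ∫⁻ x in Set.Ioo 0 β, ∫⁻ y in Set.Ioo 0 x,
          ENNReal.ofReal ((f x - f y)^2 / |x - y| ^ (1+2*s)) := by
  have h21 : (0:ℝ) < 2*s-1 := by linarith
  have h21' : (0:ℝ) < 2*s+1 := by linarith
  set L := ∫⁻ x in Set.Ioo 0 β, ENNReal.ofReal (x ^ (-(2*s)) * f x ^ 2) with hLdef
  set D := ∫⁻ x in Set.Ioo 0 β, ∫⁻ y in Set.Ioo 0 x,
      ENNReal.ofReal ((f x - f y)^2 / |x - y| ^ (1+2*s)) with hDdef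
  set X := ∫⁻ x in Set.Ioo 0 β, (ENNReal.ofReal (x ^ (-s)) * av f x) ^ (2:ℕ) with hXdef
  set Y := ∫⁻ x in Set.Ioo 0 β,
      (ENNReal.ofReal (x ^ (-s)) * (ENNReal.ofReal (f x) - av f x)) ^ (2:ℕ) with hYdef
  have hK0 : (0:ℝ) < ((2*s+1)/(2*s-1))^2 := by positivity
  by_cases hDtop : D = ⊤
  · rw [hDtop, ENNReal.mul_top (ENNReal.ofReal_pos.2 hK0).ne']
    exact le_top
  have hYD : Y ≤ D := lintegral_mono_ae ((ae_restrict_iff' measurableSet_Ioo).2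
    (Filter.Eventually.of_forall fun x hx => ptY hf hf0 (by linarith) hx.1))
  have hXle : X ≤ ENNReal.ofReal ((2/(2*s+1))^2) * L := Xbound hs2 hs1 hf hf0
  have hAm : Measurable
      (fun x => ENNReal.ofReal (x ^ (-s)) * (ENNReal.ofReal (f x) - av f x)) :=
    (measurable_id.pow measurable_const).ennreal_ofReal.mul
      (hf.ennreal_ofReal.sub measurable_av)
  have hBm : Measurable (fun x => ENNReal.ofReal (x ^ (-s)) * av f x) :=
    (measurable_id.pow measurable_const).ennreal_ofReal.mul measurable_av
  have hLrw : L = ∫⁻ x in Set.Ioo 0 β,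
      (ENNReal.ofReal (x ^ (-s)) * ENNReal.ofReal (f x)) ^ (2:ℕ) := by
    refine setLIntegral_congr_fun measurableSet_Ioo (fun x hx => ?_)
    rw [mul_pow, ofReal_rpow_sq hx.1, show (2:ℝ) * -s = -(2*s) by ring,
        ← ENNReal.ofReal_pow (hf0 x), ← ENNReal.ofReal_mul (Real.rpow_nonneg hx.1.le _)]
  have hmink : L ^ (1/2:ℝ) ≤ Y ^ (1/2:ℝ) + X ^ (1/2:ℝ) := by
    have hpt : ∀ x : ℝ, (ENNReal.ofReal (x ^ (-s)) * ENNReal.ofReal (f x)) ^ (2:ℕ)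
        ≤ ((fun z => ENNReal.ofReal (z ^ (-s)) * (ENNReal.ofReal (f z) - av f z)) x
            + (fun z => ENNReal.ofReal (z ^ (-s)) * av f z) x) ^ (2:ℕ) := by
      intro x
      refine pow_le_pow_left' ?_ 2
      show _ ≤ ENNReal.ofReal (x ^ (-s)) * (ENNReal.ofReal (f x) - av f x)
          + ENNReal.ofReal (x ^ (-s)) * av f x
      rw [← mul_add]
      exact mul_le_mul_right le_tsub_add _
    have hMk := ENNReal.lintegral_Lp_add_le (μ := volume.restrict (Set.Ioo 0 β))
      hAm.aemeasurable hBm.aemeasurable one_le_two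
    simp only [Pi.add_apply, r2nat] at hMk
    calc L ^ (1/2:ℝ)
        ≤ (∫⁻ x in Set.Ioo 0 β,
            ((fun z => ENNReal.ofReal (z ^ (-s)) * (ENNReal.ofReal (f z) - av f z)) x
              + (fun z => ENNReal.ofReal (z ^ (-s)) * av f z) x) ^ (2:ℕ)) ^ (1/2:ℝ) := by
          rw [hLrw]
          exact ENNReal.rpow_le_rpow (lintegral_mono hpt) (by norm_num)
      _ ≤ Y ^ (1/2:ℝ) + X ^ (1/2:ℝ) := hMk
  have hXr : X ^ (1/2:ℝ) ≤ ENNReal.ofReal (2/(2*s+1)) * L ^ (1/2:ℝ) := by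
    have h := ENNReal.rpow_le_rpow hXle (by norm_num : (0:ℝ) ≤ 1/2)
    rwa [ENNReal.mul_rpow_of_nonneg _ _ (by norm_num : (0:ℝ) ≤ 1/2),
        ofReal_sq_rpow_half (by positivity)] at h
  have hLne : L ≠ ⊤ := hfin.ne
  have hXne : X ≠ ⊤ := by
    refine (hXle.trans_lt ?_).ne
    exact ENNReal.mul_lt_top ENNReal.ofReal_lt_top (lt_top_iff_ne_top.2 hLne)
  have hYne : Y ≠ ⊤ := (hYD.trans_lt (lt_top_iff_ne_top.2 hDtop)).ne
  have hLr : L ^ (1/2:ℝ) ≠ ⊤ := ENNReal.rpow_ne_top_of_nonneg (by norm_num) hLne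
  have hYr : Y ^ (1/2:ℝ) ≠ ⊤ := ENNReal.rpow_ne_top_of_nonneg (by norm_num) hYne
  have hXr' : X ^ (1/2:ℝ) ≠ ⊤ := ENNReal.rpow_ne_top_of_nonneg (by norm_num) hXne
  set l := (L ^ (1/2:ℝ)).toReal with hl
  set yv := (Y ^ (1/2:ℝ)).toReal with hyv
  set xv := (X ^ (1/2:ℝ)).toReal with hxv
  have hlyx : l ≤ yv + xv := by
    have h := ENNReal.toReal_mono (ENNReal.add_ne_top.2 ⟨hYr, hXr'⟩) hmink
    rwa [ENNReal.toReal_add hYr hXr'] at h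
  have hxl : xv ≤ 2/(2*s+1) * l := by
    have h := ENNReal.toReal_mono (ENNReal.mul_ne_top ENNReal.ofReal_ne_top hLr) hXr
    rwa [ENNReal.toReal_mul, ENNReal.toReal_ofReal (by positivity)] at h
  have hl0 : 0 ≤ l := ENNReal.toReal_nonneg
  have hyv0 : 0 ≤ yv := ENNReal.toReal_nonneg
  have hlle : l ≤ (2*s+1)/(2*s-1) * yv := by
    have hstep : l ≤ yv + 2/(2*s+1)*l := by linarith
    have hmul := mul_le_mul_of_nonneg_right hstep h21'.le
    have hexp : (yv + 2/(2*s+1)*l)*(2*s+1) = yv*(2*s+1) + 2*l := by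
      field_simp
    rw [hexp] at hmul
    rw [div_mul_eq_mul_div, le_div_iff₀ h21]
    linarith
  have hfinal : L.toReal ≤ ((2*s+1)/(2*s-1))^2 * Y.toReal := by
    have hLto : L.toReal = l^2 := by rw [hl, ← ENNReal.toReal_pow, hhalfpow]
    have hYto : Y.toReal = yv^2 := by rw [hyv, ← ENNReal.toReal_pow, hhalfpow]
    rw [hLto, hYto]
    calc l^2 ≤ ((2*s+1)/(2*s-1) * yv)^2 := by
          have := pow_le_pow_left₀ hl0 hlle 2
          exact this
      _ = ((2*s+1)/(2*s-1))^2 * yv^2 := by ring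
  have hfin2 : L ≤ ENNReal.ofReal (((2*s+1)/(2*s-1))^2) * Y := by
    conv_lhs => rw [← ENNReal.ofReal_toReal hLne]
    conv_rhs => rw [← ENNReal.ofReal_toReal hYne]
    rw [← ENNReal.ofReal_mul (by positivity)]
    exact ENNReal.ofReal_le_ofReal hfinal
  exact hfin2.trans (mul_le_mul_right hYD _)

end LAKK

/-- the weighted integrability estimate of Lemma LAKK. -/
theorem weighted_integrability {n : ℕ} (hn : 1 ≤ n) (s : ℝ)
    (hs : s ∈ Set.Ioo (1/2 : ℝ) 1) (β : ℝ) (hβ : 0 < β)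
    (Q : ℝ → Eucl n) (hQmeas : Measurable Q)
    (M : ℝ) (hM : ∀ x : ℝ, 0 ≤ x → ‖Q x‖ ≤ M)
    (hQc : ContinuousOn Q (Set.Ico 0 1)) (hQ0 : Q 0 = 0)
    (hQfin : gagliardoSq s Q (Set.Ico 0 1) < ⊤) :
    (∫⁻ x in Set.Ioi (0:ℝ), ENNReal.ofReal (x ^ (-(2*s)) * ‖Q x‖ ^ 2)) ≤
      ENNReal.ofReal (Cs s) *
        ((∫⁻ x in Set.Ioo 0 β, ∫⁻ y in Set.Ioo 0 x,
            ENNReal.ofReal (‖Q x - Q y‖ ^ 2 / |x - y| ^ (1 + 2*s))) +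
          ENNReal.ofReal (4 * M ^ 2 / ((2*s - 1) * β ^ (2*s - 1)))) := by
  obtain ⟨hs2, hs1⟩ := hs
  have h21 : (0:ℝ) < 2*s - 1 := by linarith
  have h21' : (0:ℝ) < 2*s + 1 := by linarith
  have hM0 : 0 ≤ M := by
    have h := hM 0 le_rfl
    rwa [hQ0, norm_zero] at h
  have hCs2 : (2:ℝ) ≤ Cs s := by
    simp only [Cs]
    have h4 : 0 ≤ 4 / (2*s-1)^2 := by positivity
    linarith
  have hCs0 : (0:ℝ) ≤ Cs s := by linarith
  set D := ∫⁻ x in Set.Ioo 0 β, ∫⁻ y in Set.Ioo 0 x,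
      ENNReal.ofReal (‖Q x - Q y‖ ^ 2 / |x - y| ^ (1 + 2*s)) with hD
  -- continuity at 0 : smallness of ‖Q‖ near 0
  have hcont : ∀ c : ℝ, 0 < c → ∃ h : ℝ, 0 < h ∧ ∀ x ∈ Set.Ioc (0:ℝ) h, ‖Q x‖ ≤ c := by
    intro c hc
    have h0 : ContinuousWithinAt Q (Set.Ico 0 1) 0 := hQc 0 ⟨le_rfl, zero_lt_one⟩
    rw [Metric.continuousWithinAt_iff] at h0
    obtain ⟨δ, hδ0, hδ⟩ := h0 c hc
    refine ⟨min (δ/2) (1/2), by positivity, fun x hx => ?_⟩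
    have hle1 : min (δ/2) (1/2 : ℝ) ≤ 1/2 := min_le_right _ _
    have hle2 : min (δ/2) (1/2 : ℝ) ≤ δ/2 := min_le_left _ _
    have hx1 : x ∈ Set.Ico (0:ℝ) 1 := ⟨hx.1.le, by have := hx.2; linarith⟩
    have hxd : dist x 0 < δ := by
      rw [Real.dist_eq, sub_zero, abs_of_pos hx.1]
      have := hx.2; linarith
    have h := hδ hx1 hxd
    rw [hQ0, dist_zero_right] at h
    exact h.le
  -- truncations
  set fm : ℕ → ℝ → ℝ := fun m x => max (‖Q x‖ - 1/((m:ℝ)+1)) 0 with hfm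
  have hfmmeas : ∀ m, Measurable (fm m) :=
    fun m => (hQmeas.norm.sub measurable_const).max measurable_const
  have hfm0 : ∀ m x, 0 ≤ fm m x := fun m x => le_max_right _ _
  have hfmq : ∀ m x, fm m x ≤ ‖Q x‖ := by
    intro m x
    apply max_le _ (norm_nonneg _)
    have hp : (0:ℝ) < 1/((m:ℝ)+1) := by positivity
    linarith
  have hfmmono : ∀ x : ℝ, Monotone (fun m : ℕ => fm m x) := by
    intro x a b hab
    have hc : 1/((b:ℝ)+1) ≤ 1/((a:ℝ)+1) := by
      apply one_div_le_one_div_of_le (by positivity)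
      have := (Nat.cast_le (α := ℝ)).2 hab
      linarith
    exact max_le_max (by linarith) le_rfl
  -- contraction of differences
  have hcontr : ∀ (m : ℕ) (x y : ℝ), (fm m x - fm m y)^2 ≤ ‖Q x - Q y‖^2 := by
    intro m x y
    have h1 : |fm m x - fm m y| ≤ |‖Q x‖ - ‖Q y‖| := by
      have h := abs_max_sub_max_le_abs (‖Q x‖ - 1/((m:ℝ)+1)) (‖Q y‖ - 1/((m:ℝ)+1)) 0
      rwa [sub_sub_sub_cancel_right] at h
    have h2 : |‖Q x‖ - ‖Q y‖| ≤ ‖Q x - Q y‖ := abs_norm_sub_norm_le _ _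
    calc (fm m x - fm m y)^2 = |fm m x - fm m y|^2 := (sq_abs _).symm
      _ ≤ ‖Q x - Q y‖^2 := pow_le_pow_left₀ (abs_nonneg _) (h1.trans h2) 2
  -- per-m finiteness
  have hLfin : ∀ m : ℕ,
      (∫⁻ x in Set.Ioo 0 β, ENNReal.ofReal (x ^ (-(2*s)) * fm m x ^ 2)) < ⊤ := by
    intro m
    obtain ⟨h, hh0, hh⟩ := hcont (1/((m:ℝ)+1)) (by positivity)
    have hbd : ∀ x ∈ Set.Ioo (0:ℝ) β, ENNReal.ofReal (x ^ (-(2*s)) * fm m x ^ 2)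
        ≤ ENNReal.ofReal (h ^ (-(2*s)) * M^2) := by
      intro x hx
      rcases le_or_gt x h with hxh | hxh
      · have hz : fm m x = 0 := by
          have := hh x ⟨hx.1, hxh⟩
          simp only [hfm]
          apply max_eq_right
          linarith
        rw [hz]
        simp
      · refine ENNReal.ofReal_le_ofReal ?_
        have ha : x ^ (-(2*s)) ≤ h ^ (-(2*s)) :=
          Real.rpow_le_rpow_of_nonpos hh0 hxh.le (by linarith)
        have hb : fm m x ^ 2 ≤ M ^ 2 :=
          pow_le_pow_left₀ (hfm0 m x) ((hfmq m x).trans (hM x hx.1.le)) 2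
        have hc : (0:ℝ) ≤ x ^ (-(2*s)) := Real.rpow_nonneg hx.1.le _
        nlinarith [sq_nonneg (fm m x)]
    calc (∫⁻ x in Set.Ioo 0 β, ENNReal.ofReal (x ^ (-(2*s)) * fm m x ^ 2))
        ≤ ∫⁻ _ in Set.Ioo 0 β, ENNReal.ofReal (h ^ (-(2*s)) * M^2) :=
          lintegral_mono_ae ((ae_restrict_iff' measurableSet_Ioo).2
            (Filter.Eventually.of_forall hbd))
      _ = ENNReal.ofReal (h ^ (-(2*s)) * M^2) * volume (Set.Ioo (0:ℝ) β) :=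
          setLIntegral_const _ _
      _ < ⊤ := ENNReal.mul_lt_top ENNReal.ofReal_lt_top
          (by rw [Real.volume_Ioo]; exact ENNReal.ofReal_lt_top)
  -- per-m Gagliardo bound
  have hDm : ∀ m : ℕ, (∫⁻ x in Set.Ioo 0 β, ∫⁻ y in Set.Ioo 0 x,
      ENNReal.ofReal ((fm m x - fm m y)^2 / |x - y| ^ (1+2*s))) ≤ D := by
    intro m
    refine lintegral_mono fun x => lintegral_mono fun y => ENNReal.ofReal_le_ofReal ?_
    rw [div_eq_mul_inv, div_eq_mul_inv]
    exact mul_le_mul_of_nonneg_right (hcontr m x y)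
      (inv_nonneg.2 (Real.rpow_nonneg (abs_nonneg _) _))
  -- per-m core bound
  have hKCs : ((2*s+1)/(2*s-1))^2 ≤ Cs s := by
    simp only [Cs]
    rw [div_pow, div_le_iff₀ (by positivity)]
    have h4 : 4/(2*s-1)^2 * (2*s-1)^2 = 4 := by field_simp
    nlinarith [sq_nonneg (2*s-3), h4]
  have hcore : ∀ m : ℕ, (∫⁻ x in Set.Ioo 0 β, ENNReal.ofReal (x ^ (-(2*s)) * fm m x ^ 2))
      ≤ ENNReal.ofReal (Cs s) * D := by
    intro m
    refine (LAKK.core hs2 hs1 (hfmmeas m) (hfm0 m) (hLfin m)).trans ?_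
    exact mul_le_mul' (ENNReal.ofReal_le_ofReal hKCs) (hDm m)
  -- monotone convergence
  set Gm : ℕ → ℝ → ℝ≥0∞ :=
    fun m x => ENNReal.ofReal (x ^ (-(2*s))) * ENNReal.ofReal (fm m x) ^ (2:ℕ) with hGm
  have hGmm : ∀ m, Measurable (Gm m) := fun m =>
    ((measurable_id.pow measurable_const).ennreal_ofReal).mul
      (((hfmmeas m).ennreal_ofReal).pow_const 2)
  have hGmono : Monotone Gm := by
    intro a b hab x
    exact mul_le_mul_right
      (pow_le_pow_left' (ENNReal.ofReal_le_ofReal (hfmmono x hab)) 2) _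
  have hsup1 : ∀ x : ℝ, (⨆ m, Gm m x)
      = ENNReal.ofReal (x ^ (-(2*s))) * ENNReal.ofReal ‖Q x‖ ^ (2:ℕ) := by
    intro x
    refine tendsto_nhds_unique (tendsto_atTop_iSup (fun a b hab => hGmono hab x)) ?_
    have h1 : Filter.Tendsto (fun m : ℕ => fm m x) Filter.atTop (𝓝 ‖Q x‖) := by
      have h2 : Filter.Tendsto (fun m : ℕ => ‖Q x‖ - 1/((m:ℝ)+1)) Filter.atTop
          (𝓝 (‖Q x‖ - 0)) :=
        tendsto_const_nhds.sub tendsto_one_div_add_atTop_nhds_zero_nat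
      rw [sub_zero] at h2
      have h3 := h2.max (tendsto_const_nhds (x := (0:ℝ)))
      rwa [max_eq_left (norm_nonneg _)] at h3
    have h4 : Filter.Tendsto (fun m : ℕ => ENNReal.ofReal (fm m x)) Filter.atTop
        (𝓝 (ENNReal.ofReal ‖Q x‖)) :=
      (ENNReal.continuous_ofReal.tendsto _).comp h1
    exact ENNReal.Tendsto.const_mul (ENNReal.Tendsto.pow h4) (Or.inr ENNReal.ofReal_ne_top)
  have hmain : (∫⁻ x in Set.Ioo 0 β, ENNReal.ofReal (x ^ (-(2*s)) * ‖Q x‖ ^ 2))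
      ≤ ENNReal.ofReal (Cs s) * D := by
    have e1 : (∫⁻ x in Set.Ioo 0 β, ENNReal.ofReal (x ^ (-(2*s)) * ‖Q x‖ ^ 2))
        = ∫⁻ x in Set.Ioo 0 β, ⨆ m, Gm m x := by
      refine setLIntegral_congr_fun measurableSet_Ioo
        (fun x hx => ?_)
      rw [hsup1 x, ← ENNReal.ofReal_pow (norm_nonneg _),
          ← ENNReal.ofReal_mul (Real.rpow_nonneg hx.1.le _)]
    rw [e1, lintegral_iSup hGmm hGmono]
    refine iSup_le fun m => ?_
    have e2 : (∫⁻ x in Set.Ioo 0 β, Gm m x)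
        = ∫⁻ x in Set.Ioo 0 β, ENNReal.ofReal (x ^ (-(2*s)) * fm m x ^ 2) := by
      refine setLIntegral_congr_fun measurableSet_Ioo
        (fun x hx => ?_)
      simp only [hGm]
      rw [← ENNReal.ofReal_pow (hfm0 m x),
          ← ENNReal.ofReal_mul (Real.rpow_nonneg hx.1.le _)]
    rw [e2]
    exact hcore m
  -- tail
  have htail : (∫⁻ x in Set.Ici β, ENNReal.ofReal (x ^ (-(2*s)) * ‖Q x‖ ^ 2))
      ≤ ENNReal.ofReal (Cs s)
          * ENNReal.ofReal (4 * M ^ 2 / ((2*s - 1) * β ^ (2*s - 1))) := by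
    have h1 : (∫⁻ x in Set.Ici β, ENNReal.ofReal (x ^ (-(2*s)) * ‖Q x‖ ^ 2))
        ≤ ∫⁻ x in Set.Ici β, ENNReal.ofReal (M^2) * ENNReal.ofReal (x ^ (-(2*s))) := by
      refine lintegral_mono_ae ((ae_restrict_iff' measurableSet_Ici).2
        (Filter.Eventually.of_forall fun x hx => ?_))
      have hx0 : 0 < x := lt_of_lt_of_le hβ hx
      rw [← ENNReal.ofReal_mul (sq_nonneg M)]
      refine ENNReal.ofReal_le_ofReal ?_
      have hq2 : ‖Q x‖ ^2 ≤ M^2 := pow_le_pow_left₀ (norm_nonneg _) (hM x hx0.le) 2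
      have hw : 0 ≤ x ^ (-(2*s)) := Real.rpow_nonneg hx0.le _
      nlinarith
    rw [lintegral_const_mul' _ _ ENNReal.ofReal_ne_top] at h1
    have h2 : (∫⁻ x in Set.Ici β, ENNReal.ofReal (x ^ (-(2*s))))
        = ENNReal.ofReal (β ^ (-(2*s)+1) / (-(-(2*s)+1))) := by
      rw [← Measure.restrict_congr_set Ioi_ae_eq_Ici, LAKK.lint_Ioi_rpow (by linarith) hβ]
    rw [h2] at h1
    refine h1.trans ?_
    rw [← ENNReal.ofReal_mul (sq_nonneg M), ← ENNReal.ofReal_mul hCs0]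
    refine ENNReal.ofReal_le_ofReal ?_
    have hPb : (0:ℝ) < β ^ (2*s-1) := Real.rpow_pos_of_pos hβ _
    have hβr : β ^ (-(2*s)+1) = (β ^ (2*s-1))⁻¹ := by
      rw [show (-(2*s)+1:ℝ) = -(2*s-1) by ring, Real.rpow_neg hβ.le]
    rw [hβr, show (-(-(2*s)+1):ℝ) = 2*s-1 by ring]
    have hA0 : (0:ℝ) ≤ M^2/((2*s-1) * β^(2*s-1)) :=
      div_nonneg (sq_nonneg M) (mul_nonneg h21.le hPb.le)
    have heq : M^2 * ((β^(2*s-1))⁻¹/(2*s-1)) = M^2/((2*s-1) * β^(2*s-1)) := by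
      rw [div_eq_mul_inv, div_eq_mul_inv, mul_inv]
      ring
    rw [heq, show (4*M^2/((2*s-1) * β^(2*s-1)) : ℝ)
        = 4*(M^2/((2*s-1) * β^(2*s-1))) by ring]
    nlinarith [mul_nonneg (sub_nonneg.2 hCs2) hA0, hA0]
  -- combine
  have hIoi : Set.Ioi (0:ℝ) = Set.Ioo 0 β ∪ Set.Ici β := by
    ext x
    simp only [Set.mem_Ioi, Set.mem_union, Set.mem_Ioo, Set.mem_Ici]
    constructor
    · intro hx
      rcases lt_or_ge x β with hc | hc
      · exact Or.inl ⟨hx, hc⟩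
      · exact Or.inr hc
    · rintro (⟨h1, _⟩ | hc)
      · exact h1
      · linarith
  rw [hIoi, lintegral_union measurableSet_Ici
      (Set.disjoint_left.mpr fun x hx hx' => absurd hx.2 (not_lt.2 hx'))]
  rw [mul_add]
  exact add_le_add hmain htail
end
end
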